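/- arXiv:1901.10636 — 9 statements merged into one kernel-verified Lean document; each statement's English description precedes it below -/
import Mathlib

section
/- Let G and N be finite groups of the same order such that E'(G,N) is non-empty, i.e. there exist a group homomorphism f : G → Aut(N) and a bijective map g : G → N satisfying g(στ) = g(σ)·f(σ)(g(τ)) for all σ, τ ∈ G. If G is abelian, then N is solvable. -/
/-! Auxiliary lemmas: Itô's theorem (a group that is the product of two abelian
subgroups is metabelian, hence solvable), and its application to the semidirect
product `N ⋊[f] G`. -/

section Ito

open scoped commutatorElement

variable {P : Type*} [Group P]

/-- Rule (A): conjugating a commutator `⁅a,b⁆` by `a₁` (commuting with `a`) where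
`a₁ * b * a₁⁻¹ = b₂ * a₂` with `a₂` commuting with `a`, yields `⁅a, b₂⁆`. -/
private lemma ito_ruleA (a a₂ b b₂ a₁ : P)
    (h1 : a₁ * a = a * a₁) (h2 : a₂ * a = a * a₂)
    (hdec : a₁ * b * a₁⁻¹ = b₂ * a₂) :
    a₁ * ⁅a, b⁆ * a₁⁻¹ = ⁅a, b₂⁆ := by
  have e := map_commutatorElement (MulAut.conj a₁).toMonoidHom a b
  simp only [MulEquiv.coe_toMonoidHom, MulAut.conj_apply] at e
  rw [hdec] at e
  have ha : a₁ * a * a₁⁻¹ = a := by rw [h1, mul_assoc, mul_inv_cancel, mul_one]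
  rw [ha] at e
  rw [e]
  have h2' : a₂ * a⁻¹ = a⁻¹ * a₂ := by
    have c : Commute a₂ a := h2
    exact c.inv_right.eq
  simp only [commutatorElement_def, mul_inv_rev]
  calc a * (b₂ * a₂) * a⁻¹ * (a₂⁻¹ * b₂⁻¹)
      = a * b₂ * (a₂ * a⁻¹) * a₂⁻¹ * b₂⁻¹ := by group
    _ = a * b₂ * (a⁻¹ * a₂) * a₂⁻¹ * b₂⁻¹ := by rw [h2']
    _ = a * b₂ * a⁻¹ * b₂⁻¹ := by group

/-- Rule (B): conjugating a commutator `⁅a,b⁆` by `b₁` (commuting with `b`) where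
`b₁ * a * b₁⁻¹ = a₄ * b₄` with `b₄` commuting with `b`, yields `⁅a₄, b⁆`. -/
private lemma ito_ruleB (a a₄ b b₄ b₁ : P)
    (h1 : b₁ * b = b * b₁) (h2 : b₄ * b = b * b₄)
    (hdec : b₁ * a * b₁⁻¹ = a₄ * b₄) :
    b₁ * ⁅a, b⁆ * b₁⁻¹ = ⁅a₄, b⁆ := by
  have e := map_commutatorElement (MulAut.conj b₁).toMonoidHom a b
  simp only [MulEquiv.coe_toMonoidHom, MulAut.conj_apply] at e
  rw [hdec] at e
  have hb : b₁ * b * b₁⁻¹ = b := by rw [h1, mul_assoc, mul_inv_cancel, mul_one]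
  rw [hb] at e
  rw [e]
  simp only [commutatorElement_def, mul_inv_rev]
  calc a₄ * b₄ * b * (b₄⁻¹ * a₄⁻¹) * b⁻¹
      = a₄ * (b₄ * b) * b₄⁻¹ * a₄⁻¹ * b⁻¹ := by group
    _ = a₄ * (b * b₄) * b₄⁻¹ * a₄⁻¹ * b⁻¹ := by rw [h2]
    _ = a₄ * b * a₄⁻¹ * b⁻¹ := by group

/-- **Itô's theorem** (solvability form): if a group `P` is the product of two
abelian subgroups `A` and `B`, then `P` is solvable. -/
theorem ito_solvable (A B : Subgroup P)
    (hA : ∀ x ∈ A, ∀ y ∈ A, x * y = y * x)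
    (hB : ∀ x ∈ B, ∀ y ∈ B, x * y = y * x)
    (hAB : ∀ p : P, ∃ a ∈ A, ∃ b ∈ B, p = a * b) : IsSolvable P := by
  classical
  -- B-then-A decompositions
  have hBA : ∀ p : P, ∃ b ∈ B, ∃ a ∈ A, p = b * a := by
    intro p
    obtain ⟨a, ha, b, hb, h⟩ := hAB p⁻¹
    refine ⟨b⁻¹, B.inv_mem hb, a⁻¹, A.inv_mem ha, ?_⟩
    rw [← mul_inv_rev, ← h, inv_inv]
  set Ω : Set P := {x | ∃ a ∈ A, ∃ b ∈ B, ⁅a, b⁆ = x} with hΩdef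
  set K : Subgroup P := Subgroup.closure Ω with hKdef
  have hΩK : Ω ⊆ (K : Set P) := Subgroup.subset_closure
  -- Ω is closed under conjugation by elements of A
  have hconjA : ∀ a₁ ∈ A, ∀ x ∈ Ω, a₁ * x * a₁⁻¹ ∈ Ω := by
    rintro a₁ ha₁ x ⟨a, ha, b, hb, rfl⟩
    obtain ⟨b₂, hb₂, a₂, ha₂, hdec⟩ := hBA (a₁ * b * a₁⁻¹)
    exact ⟨a, ha, b₂, hb₂,
      (ito_ruleA a a₂ b b₂ a₁ (hA a₁ ha₁ a ha) (hA a₂ ha₂ a ha) hdec).symm⟩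
  -- Ω is closed under conjugation by elements of B
  have hconjB : ∀ b₁ ∈ B, ∀ x ∈ Ω, b₁ * x * b₁⁻¹ ∈ Ω := by
    rintro b₁ hb₁ x ⟨a, ha, b, hb, rfl⟩
    obtain ⟨a₄, ha₄, b₄, hb₄, hdec⟩ := hAB (b₁ * a * b₁⁻¹)
    exact ⟨a₄, ha₄, b, hb,
      (ito_ruleB a a₄ b b₄ b₁ (hB b₁ hb₁ b hb) (hB b₄ hb₄ b hb) hdec).symm⟩
  -- the swap property: conjugation by elements of A and of B commute on Ω
  have hswap : ∀ a₁ ∈ A, ∀ b₁ ∈ B, ∀ x ∈ Ω,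
      a₁ * (b₁ * x * b₁⁻¹) * a₁⁻¹ = b₁ * (a₁ * x * a₁⁻¹) * b₁⁻¹ := by
    rintro a₁ ha₁ b₁ hb₁ x ⟨a, ha, b, hb, rfl⟩
    obtain ⟨b₂, hb₂, a₂, ha₂, hd1⟩ := hBA (a₁ * b * a₁⁻¹)
    obtain ⟨a₄, ha₄, b₄, hb₄, hd2⟩ := hAB (b₁ * a * b₁⁻¹)
    rw [ito_ruleB a a₄ b b₄ b₁ (hB b₁ hb₁ b hb) (hB b₄ hb₄ b hb) hd2,
        ito_ruleA a₄ a₂ b b₂ a₁ (hA a₁ ha₁ a₄ ha₄) (hA a₂ ha₂ a₄ ha₄) hd1,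
        ito_ruleA a a₂ b b₂ a₁ (hA a₁ ha₁ a ha) (hA a₂ ha₂ a ha) hd1,
        ito_ruleB a a₄ b₂ b₄ b₁ (hB b₁ hb₁ b₂ hb₂) (hB b₄ hb₄ b₂ hb₂) hd2]
  -- elements of Ω pairwise commute
  have hcommΩ : ∀ x ∈ Ω, ∀ y ∈ Ω, y * x * y⁻¹ = x := by
    rintro x hx y ⟨a₁, ha₁, b₁, hb₁, rfl⟩
    set x₁ : P := b₁⁻¹ * x * b₁ with hx₁def
    have hx₁ : x₁ ∈ Ω := by
      have := hconjB b₁⁻¹ (B.inv_mem hb₁) x hx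
      rwa [inv_inv] at this
    have hs := hswap a₁⁻¹ (A.inv_mem ha₁) b₁ hb₁ x₁ hx₁
    rw [inv_inv] at hs
    have hb : b₁ * x₁ * b₁⁻¹ = x := by rw [hx₁def]; group
    rw [hb] at hs
    have e1 : ⁅a₁, b₁⁆ * x * ⁅a₁, b₁⁆⁻¹ = a₁ * (b₁ * (a₁⁻¹ * x₁ * a₁) * b₁⁻¹) * a₁⁻¹ := by
      rw [hx₁def]; simp only [commutatorElement_def]; group
    rw [e1, ← hs]
    group
  -- K is abelian
  have hKcomm : ∀ x ∈ K, ∀ y ∈ K, x * y = y * x := by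
    have step1 : ∀ x ∈ Ω, ∀ y ∈ K, Commute x y := by
      intro x hx y hy
      induction hy using Subgroup.closure_induction with
      | mem z hz =>
        have := hcommΩ x hx z hz
        have : z * x = x * z := by
          calc z * x = (z * x * z⁻¹) * z := by group
            _ = x * z := by rw [this]
        exact this.symm
      | one => exact Commute.one_right x
      | mul u v hu hv ihu ihv => exact ihu.mul_right ihv
      | inv u hu ihu => exact ihu.inv_right
    intro x hx y hy
    have : Commute x y := by
      induction hx using Subgroup.closure_induction with
      | mem z hz => exact step1 z hz y hy
      | one => exact Commute.one_left y
      | mul u v hu hv ihu ihv => exact ihu.mul_left ihv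
      | inv u hu ihu => exact ihu.inv_left
    exact this.eq
  -- K is normal
  have hconjG : ∀ (p : P), ∀ x ∈ Ω, p * x * p⁻¹ ∈ Ω := by
    intro p x hx
    obtain ⟨a, ha, b, hb, rfl⟩ := hAB p
    have h1 : b * x * b⁻¹ ∈ Ω := hconjB b hb x hx
    have h2 : a * (b * x * b⁻¹) * a⁻¹ ∈ Ω := hconjA a ha _ h1
    have : a * b * x * (a * b)⁻¹ = a * (b * x * b⁻¹) * a⁻¹ := by group
    rwa [this]
  haveI hKnormal : K.Normal := by
    constructor
    intro x hx p
    induction hx using Subgroup.closure_induction with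
    | mem z hz => exact hΩK (hconjG p z hz)
    | one => simpa using K.one_mem
    | mul u v hu hv ihu ihv =>
      have : p * (u * v) * p⁻¹ = (p * u * p⁻¹) * (p * v * p⁻¹) := by group
      rw [this]; exact K.mul_mem ihu ihv
    | inv u hu ihu =>
      have : p * u⁻¹ * p⁻¹ = (p * u * p⁻¹)⁻¹ := by group
      rw [this]; exact K.inv_mem ihu
  -- K is solvable (it is abelian)
  haveI hKsolv : Group.IsSolvable K := by
    letI : CommGroup K :=
      { (inferInstance : Group K) with
        mul_comm := fun x y => Subtype.ext (hKcomm x.1 x.2 y.1 y.2) }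
    exact inferInstance
  -- P/K is abelian, hence solvable
  haveI hQsolv : Group.IsSolvable (P ⧸ K) := by
    have hcommK : ∀ u v : P, (u ∈ A ∨ u ∈ B) → (v ∈ A ∨ v ∈ B) →
        ((u : P ⧸ K) * (v : P ⧸ K) : P ⧸ K) = (v : P ⧸ K) * (u : P ⧸ K) := by
      intro u v hu hv
      have key : ⁅u, v⁆ ∈ K := by
        rcases hu with hu | hu <;> rcases hv with hv | hv
        · have : ⁅u, v⁆ = 1 := commutatorElement_eq_one_iff_commute.mpr (hA u hu v hv)
          rw [this]; exact K.one_mem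
        · exact hΩK ⟨u, hu, v, hv, rfl⟩
        · have : ⁅v, u⁆ ∈ K := hΩK ⟨v, hv, u, hu, rfl⟩
          have h' : ⁅u, v⁆ = ⁅v, u⁆⁻¹ := by simp [commutatorElement_def]; group
          rw [h']; exact K.inv_mem this
        · have : ⁅u, v⁆ = 1 := commutatorElement_eq_one_iff_commute.mpr (hB u hu v hv)
          rw [this]; exact K.one_mem
      have : ((⁅u, v⁆ : P) : P ⧸ K) = 1 := (QuotientGroup.eq_one_iff _).mpr key
      have h2 : ⁅(u : P ⧸ K), (v : P ⧸ K)⁆ = 1 := by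
        have e : ⁅(u : P ⧸ K), (v : P ⧸ K)⁆ = ((⁅u, v⁆ : P) : P ⧸ K) := rfl
        rw [e]; exact this
      exact (commutatorElement_eq_one_iff_commute.mp h2).eq
    have hQcomm : ∀ q r : P ⧸ K, q * r = r * q := by
      intro q r
      induction q using QuotientGroup.induction_on with
      | H p =>
      induction r using QuotientGroup.induction_on with
      | H p' =>
      obtain ⟨a, ha, b, hb, rfl⟩ := hAB p
      obtain ⟨a₁, ha₁, b₁, hb₁, rfl⟩ := hAB p'
      have c1 := hcommK a a₁ (Or.inl ha) (Or.inl ha₁)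
      have c2 := hcommK a b₁ (Or.inl ha) (Or.inr hb₁)
      have c3 := hcommK b a₁ (Or.inr hb) (Or.inl ha₁)
      have c4 := hcommK b b₁ (Or.inr hb) (Or.inr hb₁)
      show ((a * b : P) : P ⧸ K) * ((a₁ * b₁ : P) : P ⧸ K)
          = ((a₁ * b₁ : P) : P ⧸ K) * ((a * b : P) : P ⧸ K)
      have e : ∀ u v : P, ((u * v : P) : P ⧸ K) = (u : P ⧸ K) * (v : P ⧸ K) := fun u v => rfl
      rw [e, e]
      set α : P ⧸ K := (a : P ⧸ K)
      set β : P ⧸ K := (b : P ⧸ K)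
      set α₁ : P ⧸ K := (a₁ : P ⧸ K)
      set β₁ : P ⧸ K := (b₁ : P ⧸ K)
      calc α * β * (α₁ * β₁) = α * (β * α₁) * β₁ := by group
        _ = α * (α₁ * β) * β₁ := by rw [c3]
        _ = (α * α₁) * (β * β₁) := by group
        _ = (α₁ * α) * (β₁ * β) := by rw [c1, c4]
        _ = α₁ * (α * β₁) * β := by group
        _ = α₁ * (β₁ * α) * β := by rw [c2]
        _ = α₁ * β₁ * (α * β) := by group
    letI : CommGroup (P ⧸ K) :=
      { (inferInstance : Group (P ⧸ K)) with mul_comm := hQcomm }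
    exact inferInstance
  exact solvable_of_ker_le_range K.subtype (QuotientGroup.mk' K)
    (by rw [QuotientGroup.ker_mk', Subgroup.range_subtype])

end Ito

/-- **Byott.** Let `G` and `N` be finite groups of the same order such that `E'(G,N)` is
non-empty, i.e. there exist a group homomorphism `f : G → Aut(N)` and a bijective map
`g : G → N` satisfying `g (σ * τ) = g σ * f σ (g τ)` for all `σ τ : G`.
If `G` is abelian, then `N` is solvable. -/
theorem regular_subgroup_abelian_implies_solvable
    {G N : Type*} [Group G] [Group N] [Fintype G] [Fintype N]
    (hcard : Fintype.card G = Fintype.card N)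
    (f : G →* MulAut N) (g : G → N) (hg : Function.Bijective g)
    (hfg : ∀ σ τ : G, g (σ * τ) = g σ * f σ (g τ))
    (hG : ∀ a b : G, a * b = b * a) :
    IsSolvable N := by
  classical
  -- the semidirect product N ⋊[f] G
  let φ : G →* N ⋊[f] G := MonoidHom.mk' (fun σ => ⟨g σ, σ⟩)
    (by
      intro σ τ
      ext
      · show g (σ * τ) = g σ * f σ (g τ)
        exact hfg σ τ
      · rfl)
  let A : Subgroup (N ⋊[f] G) := φ.range
  let B : Subgroup (N ⋊[f] G) := (SemidirectProduct.inr : G →* N ⋊[f] G).range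
  have hA : ∀ x ∈ A, ∀ y ∈ A, x * y = y * x := by
    rintro x ⟨σ, rfl⟩ y ⟨τ, rfl⟩
    rw [← map_mul, ← map_mul, hG]
  have hB : ∀ x ∈ B, ∀ y ∈ B, x * y = y * x := by
    rintro x ⟨σ, rfl⟩ y ⟨τ, rfl⟩
    rw [← map_mul, ← map_mul, hG]
  have hAB : ∀ p : N ⋊[f] G, ∃ a ∈ A, ∃ b ∈ B, p = a * b := by
    intro p
    obtain ⟨σ, hσ⟩ := hg.2 p.left
    refine ⟨φ σ, ⟨σ, rfl⟩, SemidirectProduct.inr (σ⁻¹ * p.right), ⟨σ⁻¹ * p.right, rfl⟩, ?_⟩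
    ext
    · show p.left = g σ * f σ 1
      rw [map_one, hσ, mul_one]
    · show p.right = σ * (σ⁻¹ * p.right)
      rw [mul_inv_cancel_left]
  haveI : Group.IsSolvable (N ⋊[f] G) := ito_solvable A B hA hB hAB
  exact solvable_of_solvable_injective
    (f := (SemidirectProduct.inl : N →* N ⋊[f] G)) SemidirectProduct.inl_injective
end

section
/- Let G and N be finite groups of the same order such that E'(G,N) is non-empty, i.e. there exist a group homomorphism f : G → Aut(N) and a bijective map g : G → N satisfying g(στ) = g(σ)·f(σ)(g(τ)) for all σ, τ ∈ G. If G is abelian, then N is metabelian. -/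
open Subgroup
open scoped commutatorElement

/-- Closure of a pairwise-commuting set is commutative. -/
private lemma closure_comm_aux {P : Type*} [Group P] (S : Set P)
    (hS : ∀ x ∈ S, ∀ y ∈ S, x * y = y * x) :
    ∀ x ∈ Subgroup.closure S, ∀ y ∈ Subgroup.closure S, x * y = y * x := by
  intro x hx y hy
  have h1 : Subgroup.closure S ≤ Subgroup.centralizer S := by
    rw [Subgroup.closure_le]
    intro z hz
    exact Subgroup.mem_centralizer_iff.2 fun w hw => hS w hw z hz
  have h2 : Subgroup.closure S ≤ Subgroup.centralizer {x} := by
    rw [Subgroup.closure_le]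
    intro z hz
    refine Subgroup.mem_centralizer_iff.2 ?_
    rintro w rfl
    exact (Subgroup.mem_centralizer_iff.1 (h1 hx) z hz).symm
  exact Subgroup.mem_centralizer_iff.1 (h2 hy) x rfl

private lemma conj_commutator {P : Type*} [Group P] (g x y : P) :
    g * ⁅x, y⁆ * g⁻¹ = ⁅g * x * g⁻¹, g * y * g⁻¹⁆ := by
  group

private lemma comm_mul_left_aux {P : Type*} [Group P] (a c b : P) (h : c * b = b * c) :
    ⁅a * c, b⁆ = ⁅a, b⁆ := by
  have : a * c * b * (a * c)⁻¹ * b⁻¹ = a * b * a⁻¹ * b⁻¹ := by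
    calc a * c * b * (a * c)⁻¹ * b⁻¹ = a * (c * b) * c⁻¹ * a⁻¹ * b⁻¹ := by group
      _ = a * (b * c) * c⁻¹ * a⁻¹ * b⁻¹ := by rw [h]
      _ = a * b * a⁻¹ * b⁻¹ := by group
  simpa [commutatorElement_def] using this

private lemma comm_mul_right_aux {P : Type*} [Group P] (a b c : P) (h : a * c = c * a) :
    ⁅a, b * c⁆ = ⁅a, b⁆ := by
  have hc : Commute a c := h
  have h' : c * a⁻¹ = a⁻¹ * c := hc.inv_left.symm.eq
  have : a * (b * c) * a⁻¹ * (b * c)⁻¹ = a * b * a⁻¹ * b⁻¹ := by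
    calc a * (b * c) * a⁻¹ * (b * c)⁻¹ = a * b * (c * a⁻¹) * (c⁻¹ * b⁻¹) := by group
    _ = a * b * (a⁻¹ * c) * (c⁻¹ * b⁻¹) := by rw [h']
    _ = a * b * a⁻¹ * b⁻¹ := by group
  simpa [commutatorElement_def] using this

private lemma comm_expand_left {P : Type*} [Group P] (x y z : P) :
    ⁅x * y, z⁆ = (x * ⁅y, z⁆ * x⁻¹) * ⁅x, z⁆ := by
  simp only [commutatorElement_def]; group

private lemma comm_expand_right {P : Type*} [Group P] (x y z : P) :
    ⁅x, y * z⁆ = ⁅x, y⁆ * (y * ⁅x, z⁆ * y⁻¹) := by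
  simp only [commutatorElement_def]; group

section Ito

variable {P : Type*} [Group P] (A B : Subgroup P)

/-- The core of Itô's theorem: commutators of elements of `A * B` where `A`, `B` are
abelian subgroups with `B * A ⊆ A * B`, pairwise commute. -/
private lemma ito_main
    (hA : ∀ x ∈ A, ∀ y ∈ A, x * y = y * x)
    (hB : ∀ x ∈ B, ∀ y ∈ B, x * y = y * x)
    (swap : ∀ b ∈ B, ∀ a ∈ A, ∃ a' ∈ A, ∃ b' ∈ B, b * a = a' * b')
    {x y z w : P}
    (hx : ∃ a ∈ A, ∃ b ∈ B, x = a * b) (hy : ∃ a ∈ A, ∃ b ∈ B, y = a * b)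
    (hz : ∃ a ∈ A, ∃ b ∈ B, z = a * b) (hw : ∃ a ∈ A, ∃ b ∈ B, w = a * b) :
    ⁅⁅x, y⁆, ⁅z, w⁆⁆ = 1 := by
  -- the other swap direction
  have swap2 : ∀ a ∈ A, ∀ b ∈ B, ∃ b' ∈ B, ∃ a' ∈ A, a * b = b' * a' := by
    intro a ha b hb
    obtain ⟨a', ha', b', hb', h⟩ := swap b⁻¹ (B.inv_mem hb) a⁻¹ (A.inv_mem ha)
    refine ⟨b'⁻¹, B.inv_mem hb', a'⁻¹, A.inv_mem ha', ?_⟩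
    have := congrArg (·⁻¹) h
    simpa [mul_inv_rev] using this
  -- generating commutators
  set K : Set P := {u | ∃ a ∈ A, ∃ b ∈ B, u = ⁅a, b⁆} with hK
  -- conjugation by elements of A preserves K
  have L1 : ∀ a ∈ A, ∀ b ∈ B, ∀ a₁ ∈ A, ∃ b₂ ∈ B, a₁ * ⁅a, b⁆ * a₁⁻¹ = ⁅a, b₂⁆ := by
    intro a ha b hb a₁ ha₁
    obtain ⟨b₂, hb₂, a₂, ha₂, h⟩ := swap2 a₁ ha₁ b hb
    refine ⟨b₂, hb₂, ?_⟩
    rw [conj_commutator]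
    have e1 : a₁ * a * a₁⁻¹ = a := by rw [hA a₁ ha₁ a ha]; group
    have e2 : a₁ * b * a₁⁻¹ = b₂ * (a₂ * a₁⁻¹) := by rw [← mul_assoc, h]
    rw [e1, e2, comm_mul_right_aux]
    have c1 : a * a₂ = a₂ * a := hA a ha a₂ ha₂
    have c2 : a * a₁⁻¹ = a₁⁻¹ * a := by
      have := hA a ha a₁⁻¹ (A.inv_mem ha₁); exact this
    calc a * (a₂ * a₁⁻¹) = (a * a₂) * a₁⁻¹ := by group
      _ = a₂ * (a * a₁⁻¹) := by rw [c1]; group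
      _ = a₂ * a₁⁻¹ * a := by rw [c2]; group
  -- conjugation by elements of B preserves K
  have L2 : ∀ a ∈ A, ∀ b ∈ B, ∀ b₁ ∈ B, ∃ a₂ ∈ A, b₁ * ⁅a, b⁆ * b₁⁻¹ = ⁅a₂, b⁆ := by
    intro a ha b hb b₁ hb₁
    obtain ⟨a₂, ha₂, b₂, hb₂, h⟩ := swap b₁ hb₁ a ha
    refine ⟨a₂, ha₂, ?_⟩
    rw [conj_commutator]
    have e1 : b₁ * b * b₁⁻¹ = b := by rw [hB b₁ hb₁ b hb]; group
    have e2 : b₁ * a * b₁⁻¹ = a₂ * (b₂ * b₁⁻¹) := by rw [← mul_assoc, h]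
    rw [e1, e2, comm_mul_left_aux]
    have c1 : b₂ * b = b * b₂ := hB b₂ hb₂ b hb
    have c2 : b₁⁻¹ * b = b * b₁⁻¹ := by
      have := hB b₁⁻¹ (B.inv_mem hb₁) b hb; exact this
    calc b₂ * b₁⁻¹ * b = b₂ * (b₁⁻¹ * b) := by group
      _ = (b₂ * b) * b₁⁻¹ := by rw [c2]; group
      _ = b * (b₂ * b₁⁻¹) := by rw [c1]; group
  -- generators pairwise commute
  have L3 : ∀ u ∈ K, ∀ v ∈ K, u * v = v * u := by
    rintro u ⟨a, ha, b, hb, rfl⟩ v ⟨a₁, ha₁, b₁, hb₁, rfl⟩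
    obtain ⟨a₂, ha₂, b₂', hb₂', hE1⟩ := swap b₁⁻¹ (B.inv_mem hb₁) a ha
    obtain ⟨b₃, hb₃, a₃', ha₃', hE2⟩ := swap2 a₁⁻¹ (A.inv_mem ha₁) b hb
    -- Step 1 : b₁⁻¹ ⁅a,b⁆ b₁ = ⁅a₂, b⁆
    have s1 : b₁⁻¹ * ⁅a, b⁆ * b₁⁻¹⁻¹ = ⁅a₂, b⁆ := by
      rw [conj_commutator]
      have e1 : b₁⁻¹ * b * b₁⁻¹⁻¹ = b := by
        rw [hB b₁⁻¹ (B.inv_mem hb₁) b hb]; group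
      have e2 : b₁⁻¹ * a * b₁⁻¹⁻¹ = a₂ * (b₂' * b₁) := by
        rw [← mul_assoc, hE1]; group
      rw [e1, e2, comm_mul_left_aux]
      have c1 : b₂' * b = b * b₂' := hB b₂' hb₂' b hb
      have c2 : b₁ * b = b * b₁ := hB b₁ hb₁ b hb
      calc b₂' * b₁ * b = b₂' * (b₁ * b) := by group
        _ = (b₂' * b) * b₁ := by rw [c2]; group
        _ = b * (b₂' * b₁) := by rw [c1]; group
    -- Step 2 : a₁⁻¹ ⁅a₂,b⁆ a₁ = ⁅a₂, b₃⁆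
    have s2 : a₁⁻¹ * ⁅a₂, b⁆ * a₁⁻¹⁻¹ = ⁅a₂, b₃⁆ := by
      rw [conj_commutator]
      have e1 : a₁⁻¹ * a₂ * a₁⁻¹⁻¹ = a₂ := by
        rw [hA a₁⁻¹ (A.inv_mem ha₁) a₂ ha₂]; group
      have e2 : a₁⁻¹ * b * a₁⁻¹⁻¹ = b₃ * (a₃' * a₁) := by
        rw [← mul_assoc, hE2]; group
      rw [e1, e2, comm_mul_right_aux]
      have c1 : a₂ * a₃' = a₃' * a₂ := hA a₂ ha₂ a₃' ha₃'
      have c2 : a₂ * a₁ = a₁ * a₂ := hA a₂ ha₂ a₁ ha₁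
      calc a₂ * (a₃' * a₁) = (a₂ * a₃') * a₁ := by group
        _ = a₃' * (a₂ * a₁) := by rw [c1]; group
        _ = a₃' * a₁ * a₂ := by rw [c2]; group
    -- Step 3 : b₁ ⁅a₂,b₃⁆ b₁⁻¹ = ⁅a, b₃⁆
    have s3 : b₁ * ⁅a₂, b₃⁆ * b₁⁻¹ = ⁅a, b₃⁆ := by
      rw [conj_commutator]
      have e1 : b₁ * b₃ * b₁⁻¹ = b₃ := by rw [hB b₁ hb₁ b₃ hb₃]; group
      have ea2 : a₂ = b₁⁻¹ * a * b₂'⁻¹ := by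
        rw [eq_mul_inv_iff_mul_eq]; exact hE1.symm
      have e2 : b₁ * a₂ * b₁⁻¹ = a * (b₂'⁻¹ * b₁⁻¹) := by
        rw [ea2]; group
      rw [e1, e2, comm_mul_left_aux]
      have c1 : b₂'⁻¹ * b₃ = b₃ * b₂'⁻¹ := hB b₂'⁻¹ (B.inv_mem hb₂') b₃ hb₃
      have c2 : b₁⁻¹ * b₃ = b₃ * b₁⁻¹ := hB b₁⁻¹ (B.inv_mem hb₁) b₃ hb₃
      calc b₂'⁻¹ * b₁⁻¹ * b₃ = b₂'⁻¹ * (b₁⁻¹ * b₃) := by group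
        _ = (b₂'⁻¹ * b₃) * b₁⁻¹ := by rw [c2]; group
        _ = b₃ * (b₂'⁻¹ * b₁⁻¹) := by rw [c1]; group
    -- Step 4 : a₁ ⁅a,b₃⁆ a₁⁻¹ = ⁅a, b⁆
    have s4 : a₁ * ⁅a, b₃⁆ * a₁⁻¹ = ⁅a, b⁆ := by
      rw [conj_commutator]
      have e1 : a₁ * a * a₁⁻¹ = a := by rw [hA a₁ ha₁ a ha]; group
      have eb3 : b₃ = a₁⁻¹ * b * a₃'⁻¹ := by
        rw [eq_mul_inv_iff_mul_eq]; exact hE2.symm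
      have e2 : a₁ * b₃ * a₁⁻¹ = b * (a₃'⁻¹ * a₁⁻¹) := by
        rw [eb3]; group
      rw [e1, e2, comm_mul_right_aux]
      have c1 : a₃'⁻¹ * a = a * a₃'⁻¹ := hA a₃'⁻¹ (A.inv_mem ha₃') a ha
      have c2 : a₁⁻¹ * a = a * a₁⁻¹ := hA a₁⁻¹ (A.inv_mem ha₁) a ha
      calc a * (a₃'⁻¹ * a₁⁻¹) = (a * a₃'⁻¹) * a₁⁻¹ := by group
        _ = a₃'⁻¹ * (a * a₁⁻¹) := by rw [← c1]; group
        _ = a₃'⁻¹ * a₁⁻¹ * a := by rw [← c2]; group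
    -- compose: conjugation by ⁅a₁,b₁⁆ fixes ⁅a,b⁆
    have key : ⁅a₁, b₁⁆ * ⁅a, b⁆ * ⁅a₁, b₁⁆⁻¹ = ⁅a, b⁆ := by
      have expand : ⁅a₁, b₁⁆ * ⁅a, b⁆ * ⁅a₁, b₁⁆⁻¹ =
          a₁ * (b₁ * (a₁⁻¹ * (b₁⁻¹ * ⁅a, b⁆ * b₁⁻¹⁻¹) * a₁⁻¹⁻¹) * b₁⁻¹) * a₁⁻¹ := by
        simp only [commutatorElement_def]; group
      rw [expand, s1, s2, s3, s4]
    rw [mul_inv_eq_iff_eq_mul] at key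
    exact key.symm
  -- all relevant commutators lie in M := closure K
  set M := Subgroup.closure K with hM
  have hKM : K ⊆ M := Subgroup.subset_closure
  have memM : ∀ {p q : P}, (∃ a ∈ A, ∃ b ∈ B, p = a * b) →
      (∃ a ∈ A, ∃ b ∈ B, q = a * b) → ⁅p, q⁆ ∈ M := by
    rintro p q ⟨a, ha, b, hb, rfl⟩ ⟨a₁, ha₁, b₁, hb₁, rfl⟩
    rw [comm_expand_left]
    have h1 : ⁅b, a₁ * b₁⁆ ∈ M := by
      rw [comm_expand_right]
      have hbb : ⁅b, b₁⁆ = 1 := commutatorElement_eq_one_iff_commute.2 (hB b hb b₁ hb₁)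
      rw [hbb]
      have : ⁅b, a₁⁆ = ⁅a₁, b⁆⁻¹ := by rw [commutatorElement_inv]
      rw [this]
      simpa using M.inv_mem (hKM ⟨a₁, ha₁, b, hb, rfl⟩)
    have h2 : ⁅a, a₁ * b₁⁆ ∈ M := by
      rw [comm_expand_right]
      have haa : ⁅a, a₁⁆ = 1 := commutatorElement_eq_one_iff_commute.2 (hA a ha a₁ ha₁)
      rw [haa]
      obtain ⟨b₂, hb₂, h⟩ := L1 a ha b₁ hb₁ a₁ ha₁
      simpa [h] using hKM ⟨a, ha, b₂, hb₂, h ▸ rfl⟩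
    have h3 : a * ⁅b, a₁ * b₁⁆ * a⁻¹ ∈ M := by
      -- ⁅b, a₁*b₁⁆ = ⁅a₁,b⁆⁻¹ ; conjugate by a
      have hbb : ⁅b, b₁⁆ = 1 := commutatorElement_eq_one_iff_commute.2 (hB b hb b₁ hb₁)
      have e : ⁅b, a₁ * b₁⁆ = ⁅a₁, b⁆⁻¹ := by
        rw [comm_expand_right, hbb, commutatorElement_inv]; group
      rw [e]
      obtain ⟨b₂, hb₂, h⟩ := L1 a₁ ha₁ b hb a ha
      have : a * ⁅a₁, b⁆⁻¹ * a⁻¹ = (a * ⁅a₁, b⁆ * a⁻¹)⁻¹ := by group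
      rw [this, h]
      exact M.inv_mem (hKM ⟨a₁, ha₁, b₂, hb₂, rfl⟩)
    exact M.mul_mem h3 h2
  have hxy : ⁅x, y⁆ ∈ M := memM hx hy
  have hzw : ⁅z, w⁆ ∈ M := memM hz hw
  exact commutatorElement_eq_one_iff_commute.2
    (closure_comm_aux K L3 _ hxy _ hzw)

end Ito

/-- Let `G` and `N` be finite groups of the same order such that `E'(G,N)` is
non-empty. If `G` is abelian, then `N` is metabelian, i.e. the second derived
subgroup of `N` is trivial. -/
theorem regular_subgroup_abelian_implies_metabelian
    {G N : Type*} [Group G] [Group N] [Fintype G] [Fintype N]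
    (hcard : Fintype.card G = Fintype.card N)
    (f : G →* MulAut N) (g : G → N) (hg : Function.Bijective g)
    (hfg : ∀ σ τ : G, g (σ * τ) = g σ * f σ (g τ))
    (hG : ∀ a b : G, a * b = b * a) :
    derivedSeries N 2 = ⊥ := by
  classical
  -- the holomorph
  let φ : MulAut N →* MulAut N := MonoidHom.id _
  let Hol := N ⋊[φ] MulAut N
  -- the homomorphism G →* Hol
  let Φ : G →* Hol := MonoidHom.mk' (fun σ => ⟨g σ, f σ⟩) (by
    intro σ τ
    refine SemidirectProduct.ext ?_ ?_
    · show g (σ * τ) = g σ * φ (f σ) (g τ)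
      simpa [φ] using hfg σ τ
    · show f (σ * τ) = f σ * f τ
      simp)
  have Φ_left : ∀ σ, (Φ σ).left = g σ := fun _ => rfl
  have Φ_right : ∀ σ, (Φ σ).right = f σ := fun _ => rfl
  let A : Subgroup Hol := Φ.range
  let B : Subgroup Hol := (SemidirectProduct.inr.comp f).range
  have hA : ∀ x ∈ A, ∀ y ∈ A, x * y = y * x := by
    rintro x ⟨σ, rfl⟩ y ⟨τ, rfl⟩
    rw [← map_mul, ← map_mul, hG]
  have hB : ∀ x ∈ B, ∀ y ∈ B, x * y = y * x := by
    rintro x ⟨σ, rfl⟩ y ⟨τ, rfl⟩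
    simp only [MonoidHom.comp_apply, ← map_mul, hG]
  have swap : ∀ b ∈ B, ∀ a ∈ A, ∃ a' ∈ A, ∃ b' ∈ B, b * a = a' * b' := by
    rintro b ⟨τ, rfl⟩ a ⟨σ, rfl⟩
    obtain ⟨σ', hσ'⟩ := hg.2 (f τ (g σ))
    refine ⟨Φ σ', ⟨σ', rfl⟩, SemidirectProduct.inr (f (σ'⁻¹ * τ * σ)),
      ⟨σ'⁻¹ * τ * σ, rfl⟩, ?_⟩
    refine SemidirectProduct.ext ?_ ?_
    · show (1 : N) * φ (f τ) (g σ) = g σ' * φ (f σ') (1 : N)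
      simp [φ, hσ']
    · show f τ * f σ = f σ' * f (σ'⁻¹ * τ * σ)
      simp [← map_mul, mul_assoc]
  -- inl n lies in A * B
  have hinl : ∀ n : N, ∃ a ∈ A, ∃ b ∈ B, (SemidirectProduct.inl n : Hol) = a * b := by
    intro n
    obtain ⟨σ, rfl⟩ := hg.2 n
    refine ⟨Φ σ, ⟨σ, rfl⟩, SemidirectProduct.inr (f σ⁻¹), ⟨σ⁻¹, rfl⟩, ?_⟩
    refine SemidirectProduct.ext ?_ ?_
    · show g σ = g σ * φ (f σ) (1 : N)
      simp [φ]
    · show (1 : MulAut N) = f σ * f σ⁻¹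
      simp [← map_mul]
  -- pairwise commutation of commutators in N
  have keyN : ∀ n₁ n₂ n₃ n₄ : N, ⁅⁅n₁, n₂⁆, ⁅n₃, n₄⁆⁆ = 1 := by
    intro n₁ n₂ n₃ n₄
    have := ito_main A B hA hB swap (hinl n₁) (hinl n₂) (hinl n₃) (hinl n₄)
    have h2 : (SemidirectProduct.inl : N →* Hol) ⁅⁅n₁, n₂⁆, ⁅n₃, n₄⁆⁆ = 1 := by
      rw [map_commutatorElement, map_commutatorElement, map_commutatorElement]
      exact this
    exact SemidirectProduct.inl_injective (by simpa using h2)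
  -- conclude
  have h1 : derivedSeries N 2 = ⁅derivedSeries N 1, derivedSeries N 1⁆ := rfl
  rw [h1, eq_bot_iff]
  rw [Subgroup.commutator_le]
  intro u hu v hv
  rw [derivedSeries_one, commutator_eq_closure] at hu hv
  have hcomm : ∀ x ∈ commutatorSet N, ∀ y ∈ commutatorSet N, x * y = y * x := by
    rintro x ⟨x₁, x₂, rfl⟩ y ⟨y₁, y₂, rfl⟩
    exact commutatorElement_eq_one_iff_commute.1 (keyN x₁ x₂ y₁ y₂)
  have := closure_comm_aux _ hcomm u hu v hv
  simpa [Subgroup.mem_bot, commutatorElement_eq_one_iff_commute, commute_iff_eq] using this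
end

section
/- Let ℓ₀ be an odd prime with ℓ₀ ≠ 5, and let p be a prime such that p² divides (4^{ℓ₀}+1)(2^{ℓ₀}−1). Then p is a Wieferich prime, that is, 2^{p−1} ≡ 1 (mod p²). -/
/-! Since `(4^ℓ + 1)(2^ℓ - 1)(2^ℓ + 1) = 2^(4ℓ) - 1`, the hypothesis gives `2^(4ℓ) ≡ 1 (mod p²)`.
The order of `2` modulo `p²` divides both `4ℓ` and `φ(p²) = p(p - 1)`. It is prime to `p`, because
`p` is odd and `p ≠ ℓ` (for `p = ℓ`, Fermat gives `(4^p + 1)(2^p - 1) ≡ 5 (mod p)`, forcing `ℓ = 5`),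
so it divides `p - 1`. -/

theorem pow_sub_one_modEq_one_of_pow_modEq_one {p k a m : ℕ} (hp : p.Prime) (hpm : ¬ p ∣ m)
    (h : a ^ m ≡ 1 [MOD p ^ (k + 1)]) : a ^ (p - 1) ≡ 1 [MOD p ^ (k + 1)] := by
  have hm : m ≠ 0 := by rintro rfl; exact hpm (dvd_zero p)
  have hcop : a.Coprime (p ^ (k + 1)) :=
    Nat.Coprime.coprime_dvd_left (dvd_pow_self a hm) (by simpa using h.gcd_eq)
  have htot : a ^ (p ^ k * (p - 1)) ≡ 1 [MOD p ^ (k + 1)] := by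
    simpa [Nat.totient_prime_pow hp k.succ_pos] using Nat.ModEq.pow_totient hcop
  have hgcd : m.gcd (p ^ k * (p - 1)) = m.gcd (p - 1) :=
    Nat.Coprime.gcd_mul_left_cancel_right _ ((hp.coprime_iff_not_dvd.2 hpm).pow_left k)
  rw [← ZMod.natCast_eq_natCast_iff] at h htot ⊢
  push_cast at h htot ⊢
  have hd : (a : ZMod (p ^ (k + 1))) ^ m.gcd (p - 1) = 1 := hgcd ▸ pow_gcd_eq_one.2 ⟨h, htot⟩
  obtain ⟨e, he⟩ := Nat.gcd_dvd_right m (p - 1)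
  rw [he, pow_mul, hd, one_pow]

theorem two_pow_four_mul_modEq_one (n : ℕ) : 2 ^ (4 * n) ≡ 1 [MOD (4 ^ n + 1) * (2 ^ n - 1)] := by
  refine ((Nat.modEq_iff_dvd' Nat.one_le_two_pow).2 ⟨2 ^ n + 1, ?_⟩).symm
  have h4 : 4 ^ n = (2 ^ n) ^ 2 := by rw [← pow_mul, mul_comm, pow_mul]; norm_num
  rw [pow_mul', h4]
  zify [Nat.one_le_two_pow, Nat.one_le_pow 4 _ (Nat.two_pow_pos n)]
  ring

theorem odd_four_pow_add_one_mul_two_pow_sub_one {n : ℕ} (hn : n ≠ 0) :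
    Odd ((4 ^ n + 1) * (2 ^ n - 1)) := by
  simp [Nat.odd_sub Nat.one_le_two_pow, parity_simps, hn]

theorem four_pow_add_one_mul_two_pow_sub_one_modEq_five {p : ℕ} (hp : p.Prime) :
    (4 ^ p + 1) * (2 ^ p - 1) ≡ 5 [MOD p] := by
  have := Fact.mk hp
  rw [← ZMod.natCast_eq_natCast_iff, Nat.cast_mul, Nat.cast_sub Nat.one_le_two_pow]
  push_cast
  rw [ZMod.pow_card, ZMod.pow_card]
  norm_num

theorem wieferich_of_sq_dvd_general
    (ℓ₀ : ℕ) (hℓ : ℓ₀.Prime) (hne : ℓ₀ ≠ 5)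
    (p : ℕ) (hp : p.Prime) (hdvd : p ^ 2 ∣ (4 ^ ℓ₀ + 1) * (2 ^ ℓ₀ - 1)) :
    2 ^ (p - 1) ≡ 1 [MOD p ^ 2] := by
  have hp_dvd : p ∣ (4 ^ ℓ₀ + 1) * (2 ^ ℓ₀ - 1) := (dvd_pow_self p two_ne_zero).trans hdvd
  have hp2 : p ≠ 2 := by
    rintro rfl
    exact (odd_four_pow_add_one_mul_two_pow_sub_one hℓ.ne_zero).not_two_dvd_nat hp_dvd
  have hpℓ : p ≠ ℓ₀ := by
    rintro rfl
    have h5 : p ∣ 5 := Nat.modEq_zero_iff_dvd.1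
      ((four_pow_add_one_mul_two_pow_sub_one_modEq_five hp).symm.trans
        (Nat.modEq_zero_iff_dvd.2 hp_dvd))
    exact hne ((Nat.prime_dvd_prime_iff_eq hp Nat.prime_five).1 h5)
  have hpm : ¬ p ∣ 4 * ℓ₀ := by
    rw [hp.dvd_mul, show 4 = 2 ^ 2 by rfl]
    rintro (h | h)
    · exact hp2 ((Nat.prime_dvd_prime_iff_eq hp Nat.prime_two).1 (hp.dvd_of_dvd_pow h))
    · exact hpℓ ((Nat.prime_dvd_prime_iff_eq hp hℓ).1 h)
  exact pow_sub_one_modEq_one_of_pow_modEq_one hp hpm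
    ((two_pow_four_mul_modEq_one ℓ₀).of_dvd hdvd)

/-- Let `ℓ₀` be an odd prime with `ℓ₀ ≠ 5`, and let `p` be a prime such that `p²` divides
`(4 ^ ℓ₀ + 1) * (2 ^ ℓ₀ - 1)`.  Then `p` is a Wieferich prime, i.e.
`2 ^ (p - 1) ≡ 1 (mod p²)`. -/
theorem wieferich_of_sq_dvd
    (ℓ₀ : ℕ) (hℓ : ℓ₀.Prime) (hodd : Odd ℓ₀) (hne : ℓ₀ ≠ 5)
    (p : ℕ) (hp : p.Prime) (hdvd : p ^ 2 ∣ (4 ^ ℓ₀ + 1) * (2 ^ ℓ₀ - 1)) :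
    2 ^ (p - 1) ≡ 1 [MOD p ^ 2] :=
  wieferich_of_sq_dvd_general ℓ₀ hℓ hne p hp hdvd
end

section
/- Let Γ be a finite group which is the product of two subgroups Δ₁ and Δ₂, meaning every element of Γ can be written as δ₁δ₂ with δ₁ ∈ Δ₁ and δ₂ ∈ Δ₂. If Δ₁ and Δ₂ are both abelian, then Γ is metabelian. -/
open scoped commutatorElement

/-- **Itô.** Let `Γ` be a finite group which is the product of two subgroups `Δ₁` and `Δ₂`,
i.e. every element of `Γ` can be written as `δ₁ * δ₂` with `δ₁ ∈ Δ₁` and `δ₂ ∈ Δ₂`.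
If `Δ₁` and `Δ₂` are both abelian, then `Γ` is metabelian, i.e. the second derived
subgroup of `Γ` is trivial. -/
theorem metabelian_of_product_of_abelian
    {Γ : Type*} [Group Γ] [Fintype Γ] (Δ₁ Δ₂ : Subgroup Γ)
    (hprod : ∀ x : Γ, ∃ a ∈ Δ₁, ∃ b ∈ Δ₂, x = a * b)
    (h1 : ∀ a b : Δ₁, a * b = b * a) (h2 : ∀ a b : Δ₂, a * b = b * a) :
    derivedSeries Γ 2 = ⊥ := by
  -- commutativity inside each factor, at the level of Γ
  have h1' : ∀ a ∈ Δ₁, ∀ c ∈ Δ₁, a * c = c * a := fun a ha c hc =>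
    congrArg Subtype.val (h1 ⟨a, ha⟩ ⟨c, hc⟩)
  have h2' : ∀ b ∈ Δ₂, ∀ d ∈ Δ₂, b * d = d * b := fun b hb d hd =>
    congrArg Subtype.val (h2 ⟨b, hb⟩ ⟨d, hd⟩)
  -- reversed product decomposition
  have hprod' : ∀ x : Γ, ∃ b ∈ Δ₂, ∃ a ∈ Δ₁, x = b * a := by
    intro x
    obtain ⟨a, ha, b, hb, hx⟩ := hprod x⁻¹
    exact ⟨b⁻¹, inv_mem hb, a⁻¹, inv_mem ha, by rw [← mul_inv_rev, ← hx, inv_inv]⟩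
  -- micro-lemma: if γ commutes with a then ⁅a, b*γ⁆ = ⁅a, b⁆
  have micro1 : ∀ a b γ : Γ, γ * a⁻¹ = a⁻¹ * γ → ⁅a, b * γ⁆ = ⁅a, b⁆ := by
    intro a b γ hγ
    simp only [commutatorElement_def, mul_inv_rev]
    calc a * (b * γ) * a⁻¹ * (γ⁻¹ * b⁻¹)
        = a * b * (γ * a⁻¹) * γ⁻¹ * b⁻¹ := by group
      _ = a * b * (a⁻¹ * γ) * γ⁻¹ * b⁻¹ := by rw [hγ]
      _ = a * b * a⁻¹ * b⁻¹ := by group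
  -- micro-lemma: if δ commutes with b then ⁅a * δ, b⁆ = ⁅a, b⁆
  have micro2 : ∀ a b δ : Γ, δ * b = b * δ → ⁅a * δ, b⁆ = ⁅a, b⁆ := by
    intro a b δ hδ
    simp only [commutatorElement_def, mul_inv_rev]
    calc a * δ * b * (δ⁻¹ * a⁻¹) * b⁻¹
        = a * (δ * b) * δ⁻¹ * a⁻¹ * b⁻¹ := by group
      _ = a * (b * δ) * δ⁻¹ * a⁻¹ * b⁻¹ := by rw [hδ]
      _ = a * b * a⁻¹ * b⁻¹ := by group
  -- conjugation is a homomorphism on commutators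
  have conj_comm : ∀ g a b : Γ,
      g * ⁅a, b⁆ * g⁻¹ = ⁅g * a * g⁻¹, g * b * g⁻¹⁆ := by
    intro g a b; simp only [commutatorElement_def]; group
  -- conjugating ⁅a,b⁆ by c ∈ Δ₁ changes only the second entry (within Δ₂)
  have conjc : ∀ c ∈ Δ₁, ∀ b ∈ Δ₂, ∃ b₁ ∈ Δ₂,
      ∀ a ∈ Δ₁, c * ⁅a, b⁆ * c⁻¹ = ⁅a, b₁⁆ := by
    intro c hc b hb
    obtain ⟨b₁, hb₁, c₁, hc₁, hcb⟩ := hprod' (c * b)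
    refine ⟨b₁, hb₁, fun a ha => ?_⟩
    have hca : c * a * c⁻¹ = a := by
      rw [h1' c hc a ha]; group
    have hcbc : c * b * c⁻¹ = b₁ * (c₁ * c⁻¹) := by rw [hcb]; group
    rw [conj_comm, hca, hcbc, micro1]
    have := h1' (c₁ * c⁻¹) (mul_mem hc₁ (inv_mem hc)) a⁻¹ (inv_mem ha)
    exact this
  -- conjugating ⁅a,b⁆ by d ∈ Δ₂ changes only the first entry (within Δ₁)
  have conjd : ∀ d ∈ Δ₂, ∀ a ∈ Δ₁, ∃ a₂ ∈ Δ₁,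
      ∀ b ∈ Δ₂, d * ⁅a, b⁆ * d⁻¹ = ⁅a₂, b⁆ := by
    intro d hd a ha
    obtain ⟨a₂, ha₂, d₂, hd₂, hda⟩ := hprod (d * a)
    refine ⟨a₂, ha₂, fun b hb => ?_⟩
    have hdb : d * b * d⁻¹ = b := by
      rw [h2' d hd b hb]; group
    have hdad : d * a * d⁻¹ = a₂ * (d₂ * d⁻¹) := by rw [hda]; group
    rw [conj_comm, hdb, hdad, micro2]
    exact h2' (d₂ * d⁻¹) (mul_mem hd₂ (inv_mem hd)) b hb
  -- the key commutation: cross commutators pairwise commute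
  have key : ∀ a ∈ Δ₁, ∀ b ∈ Δ₂, ∀ c ∈ Δ₁, ∀ d ∈ Δ₂,
      Commute ⁅a, b⁆ ⁅c, d⁆ := by
    have key0 : ∀ a ∈ Δ₁, ∀ b ∈ Δ₂, ∀ c ∈ Δ₁, ∀ d ∈ Δ₂,
        ⁅a, b⁆ * (c⁻¹ * d⁻¹ * c * d) = (c⁻¹ * d⁻¹ * c * d) * ⁅a, b⁆ := by
      intro a ha b hb c hc d hd
      obtain ⟨b₁, hb₁, hcconj⟩ := conjc c hc b hb
      obtain ⟨a₂, ha₂, hdconj⟩ := conjd d hd a ha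
      set x := ⁅a, b⁆ with hx
      have E : c * (d * x * d⁻¹) * c⁻¹ = d * (c * x * c⁻¹) * d⁻¹ := by
        rw [hdconj b hb, hcconj a ha, hcconj a₂ ha₂, hdconj b₁ hb₁]
      have g1 : (c⁻¹ * d⁻¹ * c * d) * x
          = c⁻¹ * d⁻¹ * (c * (d * x * d⁻¹) * c⁻¹) * (c * d) := by group
      have g2 : x * (c⁻¹ * d⁻¹ * c * d)
          = c⁻¹ * d⁻¹ * (d * (c * x * c⁻¹) * d⁻¹) * (c * d) := by group
      rw [g1, g2, E]
    intro a ha b hb c hc d hd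
    have := key0 a ha b hb c⁻¹ (inv_mem hc) d⁻¹ (inv_mem hd)
    simp only [inv_inv] at this
    have hcd : ⁅c, d⁆ = c * d * c⁻¹ * d⁻¹ := commutatorElement_def c d
    unfold Commute SemiconjBy
    rw [hcd]
    exact this
  -- the subgroup generated by the cross commutators
  set S : Set Γ := {g | ∃ a ∈ Δ₁, ∃ b ∈ Δ₂, g = ⁅a, b⁆} with hSdef
  set H : Subgroup Γ := Subgroup.closure S with hHdef
  -- S is closed under conjugation, hence H is normal
  have hconjS : ∀ g : Γ, ∀ s ∈ S, g * s * g⁻¹ ∈ S := by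
    rintro g s ⟨a, ha, b, hb, rfl⟩
    obtain ⟨c, hc, d, hd, rfl⟩ := hprod g
    obtain ⟨a₂, ha₂, hdconj⟩ := conjd d hd a ha
    obtain ⟨b₁, hb₁, hcconj⟩ := conjc c hc b hb
    have : (c * d) * ⁅a, b⁆ * (c * d)⁻¹ = c * (d * ⁅a, b⁆ * d⁻¹) * c⁻¹ := by group
    rw [this, hdconj b hb, hcconj a₂ ha₂]
    exact ⟨a₂, ha₂, b₁, hb₁, rfl⟩
  haveI hHnormal : H.Normal := by
    constructor
    intro n hn g
    induction hn using Subgroup.closure_induction with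
    | mem s hs => exact Subgroup.subset_closure (hconjS g s hs)
    | one => simpa using one_mem H
    | mul x y hx hy ihx ihy =>
      have : g * (x * y) * g⁻¹ = (g * x * g⁻¹) * (g * y * g⁻¹) := by group
      rw [this]; exact mul_mem ihx ihy
    | inv x hx ihx =>
      have : g * x⁻¹ * g⁻¹ = (g * x * g⁻¹)⁻¹ := by group
      rw [this]; exact inv_mem ihx
  -- elements of H pairwise commute
  have hHcomm : ∀ x ∈ H, ∀ y ∈ H, Commute x y := by
    intro x hx y hy
    induction hx, hy using Subgroup.closure_induction₂ with
    | mem x y hx hy =>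
      obtain ⟨a, ha, b, hb, rfl⟩ := hx
      obtain ⟨c, hc, d, hd, rfl⟩ := hy
      exact key a ha b hb c hc d hd
    | one_left y hy => exact Commute.one_left y
    | one_right x hx => exact Commute.one_right x
    | mul_left x y z _ _ _ ih1 ih2 => exact ih1.mul_left ih2
    | mul_right y z x _ _ _ ih1 ih2 => exact ih1.mul_right ih2
    | inv_left x y _ _ ih => exact ih.inv_left
    | inv_right x y _ _ ih => exact ih.inv_right
  -- the derived subgroup is contained in H
  have hd1 : derivedSeries Γ 1 ≤ H := by
    rw [derivedSeries_succ, derivedSeries_zero, Subgroup.commutator_le]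
    intro g _ h _
    -- pass to the quotient Γ ⧸ H
    have hmk : ∀ u v : Γ, ⁅u, v⁆ ∈ H → Commute ((u : Γ ⧸ H)) ((v : Γ ⧸ H)) := by
      intro u v huv
      have : ((⁅u, v⁆ : Γ) : Γ ⧸ H) = 1 := (QuotientGroup.eq_one_iff _).mpr huv
      rw [show ((⁅u, v⁆ : Γ) : Γ ⧸ H) = ⁅(u : Γ ⧸ H), (v : Γ ⧸ H)⁆ from
        map_commutatorElement (QuotientGroup.mk' H) u v] at this
      exact commutatorElement_eq_one_iff_commute.mp this
    have hcommQ : ∀ u v : Γ, Commute ((u : Γ ⧸ H)) ((v : Γ ⧸ H)) := by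
      intro u v
      obtain ⟨a, ha, b, hb, rfl⟩ := hprod u
      obtain ⟨c, hc, d, hd, rfl⟩ := hprod v
      have hac : Commute ((a : Γ ⧸ H)) ((c : Γ ⧸ H)) := by
        have := h1' a ha c hc
        unfold Commute SemiconjBy
        rw [← QuotientGroup.mk_mul, ← QuotientGroup.mk_mul, this]
      have hbd : Commute ((b : Γ ⧸ H)) ((d : Γ ⧸ H)) := by
        have := h2' b hb d hd
        unfold Commute SemiconjBy
        rw [← QuotientGroup.mk_mul, ← QuotientGroup.mk_mul, this]
      have had : Commute ((a : Γ ⧸ H)) ((d : Γ ⧸ H)) :=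
        hmk a d (Subgroup.subset_closure ⟨a, ha, d, hd, rfl⟩)
      have hcb : Commute ((c : Γ ⧸ H)) ((b : Γ ⧸ H)) :=
        hmk c b (Subgroup.subset_closure ⟨c, hc, b, hb, rfl⟩)
      have : Commute ((a : Γ ⧸ H) * (b : Γ ⧸ H)) ((c : Γ ⧸ H) * (d : Γ ⧸ H)) :=
        (hac.mul_right had).mul_left (hcb.symm.mul_right hbd)
      simpa using this
    have : ((⁅g, h⁆ : Γ) : Γ ⧸ H) = 1 := by
      rw [show ((⁅g, h⁆ : Γ) : Γ ⧸ H) = ⁅(g : Γ ⧸ H), (h : Γ ⧸ H)⁆ from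
        map_commutatorElement (QuotientGroup.mk' H) g h]
      exact commutatorElement_eq_one_iff_commute.mpr (hcommQ g h)
    exact (QuotientGroup.eq_one_iff _).mp this
  -- conclude
  rw [show (2 : ℕ) = 1 + 1 from rfl, derivedSeries_succ, eq_bot_iff,
    Subgroup.commutator_le]
  intro g hg h hh
  rw [Subgroup.mem_bot]
  exact commutatorElement_eq_one_iff_commute.mpr (hHcomm g (hd1 hg) h (hd1 hh))
end

section
/- Let G and N be finite groups of the same order, let f : G → Aut(N) be a group homomorphism and g : G → N a bijective map satisfying g(στ) = g(σ)·f(σ)(g(τ)) for all σ, τ ∈ G. Let π : Aut(N) → Out(N) be the quotient map of Aut(N) by the normal subgroup Inn(N) of inner automorphisms. If G is insolvable and N is solvable, then the image (π∘f)(G) is an insolvable subgroup of Out(N). -/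
/-- The subgroup of inner automorphisms, i.e. the range of the conjugation homomorphism
`N → Aut(N)`, is a normal subgroup of `Aut(N)`. -/
instance innerAut_normal (N : Type*) [Group N] :
    ((MulAut.conj : N →* MulAut N).range).Normal := by
  constructor
  rintro x ⟨n, rfl⟩ φ
  refine ⟨φ n, ?_⟩
  ext y
  simp [MulAut.conj_apply, mul_assoc]

/-- Let `G` and `N` be finite groups of the same order, let `f : G → Aut(N)` be a group
homomorphism and `g : G → N` a bijective map with `g (σ * τ) = g σ * f σ (g τ)` for all
`σ τ : G`.  Let `π : Aut(N) → Out(N)` be the quotient map of `Aut(N)` by the normal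
subgroup `Inn(N)` of inner automorphisms.  If `G` is insolvable and `N` is solvable, then
the image `(π ∘ f)(G)` is an insolvable subgroup of `Out(N)`. -/
theorem image_in_outer_aut_insolvable
    {G N : Type*} [Group G] [Group N] [Fintype G] [Fintype N]
    (hcard : Fintype.card G = Fintype.card N)
    (f : G →* MulAut N) (g : G → N) (hg : Function.Bijective g)
    (hfg : ∀ σ τ : G, g (σ * τ) = g σ * f σ (g τ))
    (hG : ¬ IsSolvable G) (hN : IsSolvable N) :
    ¬ IsSolvable
      (((QuotientGroup.mk' ((MulAut.conj : N →* MulAut N).range)).comp f).range) := by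
  intro hsolv
  apply hG
  set Inn := (MulAut.conj : N →* MulAut N).range with hInn
  set h := ((QuotientGroup.mk' Inn).comp f) with hh
  set K := h.ker with hK
  set p : K →* MulAut N := f.comp K.subtype with hp
  -- g sends 1 to 1
  have hone : g 1 = 1 := by
    have := hfg 1 1
    simp only [mul_one, map_one, MulAut.one_apply] at this
    exact (left_eq_mul.mp this)
  -- the kernel of p is solvable: g restricts to an injective hom into N
  have hpker : IsSolvable p.ker := by
    have hker1 : ∀ σ : p.ker, f ((σ : K) : G) = 1 := fun σ => σ.2
    let r : p.ker →* N :=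
      { toFun := fun σ => g ((σ : K) : G)
        map_one' := hone
        map_mul' := by
          intro σ τ
          have := hfg ((σ : K) : G) ((τ : K) : G)
          rw [hker1 σ] at this
          simpa using this }
    haveI : Group.IsSolvable N := hN
    exact solvable_of_solvable_injective
      (f := r) (fun a b hab => Subtype.ext (Subtype.ext (hg.1 hab)))
  -- Inn is solvable
  have hInnSolv : IsSolvable Inn :=
    haveI : Group.IsSolvable N := hN
    solvable_of_surjective (MulAut.conj : N →* MulAut N).rangeRestrict_surjective
  -- the range of p is contained in Inn, hence solvable
  have hple : p.range ≤ Inn := by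
    rintro x ⟨σ, rfl⟩
    have : h ((σ : G)) = 1 := σ.2
    simpa [hh, hp, QuotientGroup.eq_one_iff] using this
  have hprange : IsSolvable p.range :=
    haveI : Group.IsSolvable Inn := hInnSolv
    solvable_of_solvable_injective (f := Subgroup.inclusion hple)
      (Subgroup.inclusion_injective hple)
  -- K is solvable
  have hKsolv : IsSolvable K := by
    haveI : Group.IsSolvable p.ker := hpker
    haveI : Group.IsSolvable p.range := hprange
    refine solvable_of_ker_le_range p.ker.subtype p.rangeRestrict ?_
    rw [MonoidHom.ker_rangeRestrict, Subgroup.range_subtype]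
  -- G is solvable
  haveI : Group.IsSolvable K := hKsolv
  haveI : Group.IsSolvable h.range := hsolv
  refine solvable_of_ker_le_range K.subtype h.rangeRestrict ?_
  rw [MonoidHom.ker_rangeRestrict, Subgroup.range_subtype]
end

section
/- Let G and N be finite groups of the same order, let f : G → Aut(N) be a group homomorphism and g : G → N a bijective map satisfying g(στ) = g(σ)·f(σ)(g(τ)) for all σ, τ ∈ G. Let M be a characteristic subgroup of N. Then the preimage H = g⁻¹(M) is a subgroup of G, and E'(H,M) is non-empty: the restriction map σ ↦ f(σ)|_M is a group homomorphism H → Aut(M), the restriction of g to H is a bijection H → M, and together they satisfy g(στ) = g(σ)·(f(σ)|_M)(g(τ)) for all σ, τ ∈ H. -/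
/-!
Evaluating the relation at `(1, 1)` and at `(σ⁻¹, σ)` gives `g 1 = 1` and
`g σ⁻¹ = f σ⁻¹ (g σ)⁻¹`, so invariance of `M` under every `f σ` makes `g⁻¹(M)` closed under
products and inverses. Because `M` is characteristic, every `f σ` restricts to an automorphism of `M`,
and `g` restricts to a bijection `g⁻¹(M) → M` satisfying the same relation.
-/

/-- The relation defining `E'(G, N)`: `g` is a crossed homomorphism for the action `f`. -/
def IsCocycle {G N : Type*} [Group G] [Group N] (f : G →* MulAut N) (g : G → N) : Prop :=
  ∀ σ τ : G, g (σ * τ) = g σ * f σ (g τ)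

namespace IsCocycle

variable {G N : Type*} [Group G] [Group N] {f : G →* MulAut N} {g : G → N}

theorem map_one (hfg : IsCocycle f g) : g 1 = 1 := by
  simpa using hfg 1 1

theorem map_inv (hfg : IsCocycle f g) (σ : G) : g σ⁻¹ = f σ⁻¹ (g σ)⁻¹ := by
  have h := hfg σ⁻¹ σ
  rw [inv_mul_cancel, hfg.map_one, eq_comm, mul_eq_one_iff_eq_inv] at h
  exact h.trans (_root_.map_inv _ _).symm

def preimage (hfg : IsCocycle f g) (M : Subgroup N) (hM : ∀ σ : G, ∀ x ∈ M, f σ x ∈ M) :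
    Subgroup G where
  carrier := g ⁻¹' M
  one_mem' := by
    rw [Set.mem_preimage, hfg.map_one]
    exact M.one_mem
  mul_mem' {σ τ} hσ hτ := by
    rw [Set.mem_preimage, hfg]
    exact M.mul_mem hσ (hM σ _ hτ)
  inv_mem' {σ} hσ := by
    rw [Set.mem_preimage, hfg.map_inv]
    exact hM _ _ (M.inv_mem hσ)

theorem restrict_preimage (hfg : IsCocycle f g) (M : Subgroup N)
    (hM : ∀ σ : G, ∀ x ∈ M, f σ x ∈ M) (F : hfg.preimage M hM →* MulAut M)
    (hF : ∀ (σ : hfg.preimage M hM) (x : M), ((F σ x : M) : N) = f σ x) :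
    IsCocycle F (fun σ ↦ ⟨g σ, σ.2⟩) := by
  intro σ τ
  ext
  simp only [Subgroup.coe_mul, hF]
  exact hfg σ τ

end IsCocycle

theorem preimage_of_characteristic_subgroup_general
    {G N : Type*} [Group G] [Group N]
    (f : G →* MulAut N) (g : G → N) (hg : Function.Bijective g)
    (hfg : ∀ σ τ : G, g (σ * τ) = g σ * f σ (g τ))
    (M : Subgroup N) [M.Characteristic] :
    ∃ H : Subgroup G, (H : Set G) = g ⁻¹' (M : Set N) ∧
      ∃ (F : H →* MulAut M) (g' : H → M),
        (∀ (σ : H) (x : M), ((F σ x : M) : N) = f (σ : G) (x : N)) ∧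
        (∀ σ : H, ((g' σ : M) : N) = g (σ : G)) ∧
        Function.Bijective g' ∧
        ∀ σ τ : H, g' (σ * τ) = g' σ * F σ (g' τ) := by
  have hM : ∀ σ : G, ∀ x ∈ M, f σ x ∈ M := fun σ _ hx ↦
    Subgroup.characteristic_iff_le_comap.mp ‹_› (f σ) hx
  let H := IsCocycle.preimage hfg M hM
  let F : H →* MulAut M := (MulAut.characteristic M).comp (f.comp H.subtype)
  have hF : ∀ (σ : H) (x : M), ((F σ x : M) : N) = f σ x := fun _ _ ↦ rfl
  exact ⟨H, rfl, F, hg.bijOn_preimage.mapsTo.restrict, hF, fun _ ↦ rfl,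
    hg.bijOn_preimage.bijective, IsCocycle.restrict_preimage hfg M hM F hF⟩

/-- Let `G` and `N` be finite groups of the same order, let `f : G → Aut(N)` be a group
homomorphism and `g : G → N` a bijective map with `g (σ * τ) = g σ * f σ (g τ)` for all
`σ τ : G`.  Let `M` be a characteristic subgroup of `N`.  Then the preimage
`H = g⁻¹(M)` is a subgroup of `G`, and `E'(H,M)` is non-empty: the restriction
`σ ↦ f σ |_M` is a group homomorphism `H → Aut(M)`, the restriction of `g` to `H` is a
bijection `H → M`, and together they satisfy the defining relation of `E'(H,M)`. -/
theorem preimage_of_characteristic_subgroup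
    {G N : Type*} [Group G] [Group N] [Fintype G] [Fintype N]
    (hcard : Fintype.card G = Fintype.card N)
    (f : G →* MulAut N) (g : G → N) (hg : Function.Bijective g)
    (hfg : ∀ σ τ : G, g (σ * τ) = g σ * f σ (g τ))
    (M : Subgroup N) [M.Characteristic] :
    ∃ H : Subgroup G, (H : Set G) = g ⁻¹' (M : Set N) ∧
      ∃ (F : H →* MulAut M) (g' : H → M),
        (∀ (σ : H) (x : M), ((F σ x : M) : N) = f (σ : G) (x : N)) ∧
        (∀ σ : H, ((g' σ : M) : N) = g (σ : G)) ∧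
        Function.Bijective g' ∧
        ∀ σ τ : H, g' (σ * τ) = g' σ * F σ (g' τ) :=
  preimage_of_characteristic_subgroup_general f g hg hfg M
end

section
/- Let G and N be finite groups of the same order, let f : G → Aut(N) be a group homomorphism and g : G → N a bijective map satisfying g(στ) = g(σ)·f(σ)(g(τ)) for all σ, τ ∈ G. Let M be a characteristic subgroup of N, let H = g⁻¹(M) (which is a subgroup of G), and let θ_M : Aut(N) → Aut(N/M) be the natural homomorphism sending φ to the induced automorphism ηM ↦ φ(η)M. If the quotient N/M is solvable and the kernel of θ_M∘f is insolvable, then H is insolvable. -/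
/-- For a characteristic subgroup `M` of `N`, the natural homomorphism
`θ_M : Aut(N) → Aut(N/M)` sending an automorphism `φ` of `N` to the induced automorphism
`η M ↦ φ(η) M` of the quotient `N ⧸ M`. -/
def inducedQuotientAut {N : Type*} [Group N] (M : Subgroup N) [h : M.Characteristic] :
    MulAut N →* MulAut (N ⧸ M) where
  toFun φ := QuotientGroup.congr M M φ
    (Subgroup.characteristic_iff_map_eq.mp h φ)
  map_one' := by
    ext x
    induction x using QuotientGroup.induction_on with
    | H n => rfl
  map_mul' φ ψ := by
    ext x
    induction x using QuotientGroup.induction_on with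
    | H n => rfl

/-- Let `G` and `N` be finite groups of the same order, let `f : G → Aut(N)` be a group
homomorphism and `g : G → N` a bijective map with `g (σ * τ) = g σ * f σ (g τ)` for all
`σ τ : G`.  Let `M` be a characteristic subgroup of `N`, let `H = g⁻¹(M)` (which is a
subgroup of `G`), and let `θ_M : Aut(N) → Aut(N/M)` be the natural homomorphism.  If the
quotient `N/M` is solvable and the kernel of `θ_M ∘ f` is insolvable, then `H` is
insolvable. -/
theorem preimage_insolvable_of_kernel_insolvable
    {G N : Type*} [Group G] [Group N] [Fintype G] [Fintype N]
    (hcard : Fintype.card G = Fintype.card N)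
    (f : G →* MulAut N) (g : G → N) (hg : Function.Bijective g)
    (hfg : ∀ σ τ : G, g (σ * τ) = g σ * f σ (g τ))
    (M : Subgroup N) [M.Characteristic]
    (H : Subgroup G) (hH : (H : Set G) = g ⁻¹' (M : Set N))
    (hquot : IsSolvable (N ⧸ M))
    (hker : ¬ IsSolvable ((inducedQuotientAut M).comp f).ker) :
    ¬ IsSolvable H := by
  intro hHsolv
  apply hker
  set K := ((inducedQuotientAut M).comp f).ker with hK
  -- For σ ∈ K, the induced automorphism on N ⧸ M is trivial.
  have key : ∀ σ : G, σ ∈ K → ∀ n : N, (↑(f σ n) : N ⧸ M) = (↑n : N ⧸ M) := by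
    intro σ hσ n
    have h1 : ((inducedQuotientAut M).comp f) σ = 1 := hσ
    have h2 : ((inducedQuotientAut M).comp f) σ (↑n : N ⧸ M) = (↑n : N ⧸ M) := by
      rw [h1]; rfl
    exact h2
  -- Define the homomorphism φ : K →* N ⧸ M, σ ↦ g σ mod M.
  let φ : K →* (N ⧸ M) :=
    { toFun := fun σ => (↑(g σ.1) : N ⧸ M)
      map_one' := by
        have h1 : g (1 : G) = g 1 * f 1 (g 1) := by simpa using hfg 1 1
        have h2 : f (1 : G) (g 1) = 1 := (left_eq_mul.mp h1)
        have h3 : g (1 : G) = 1 := by simpa using h2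
        simp [h3]
      map_mul' := by
        rintro ⟨σ, hσ⟩ ⟨τ, hτ⟩
        show (↑(g (σ * τ)) : N ⧸ M) = ↑(g σ) * ↑(g τ)
        rw [hfg σ τ]
        rw [QuotientGroup.mk_mul, key σ hσ (g τ)] }
  -- ker φ is solvable: it embeds into H.
  have hkerφ : IsSolvable φ.ker := by
    let ι : φ.ker →* H :=
      { toFun := fun x => ⟨x.1.1, by
          have hx : (↑(g x.1.1) : N ⧸ M) = 1 := x.2
          have hm : g x.1.1 ∈ M := (QuotientGroup.eq_one_iff _).mp hx
          have : x.1.1 ∈ (H : Set G) := by rw [hH]; exact hm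
          exact this⟩
        map_one' := rfl
        map_mul' := fun _ _ => rfl }
    have hinj : Function.Injective ι := by
      rintro ⟨⟨a, _⟩, _⟩ ⟨⟨b, _⟩, _⟩ hab
      simpa [ι, Subtype.ext_iff] using hab
    haveI : Group.IsSolvable H := hHsolv
    exact solvable_of_solvable_injective hinj
  -- Conclude K is solvable.
  haveI : Group.IsSolvable φ.ker := hkerφ
  haveI : Group.IsSolvable (N ⧸ M) := hquot
  exact solvable_of_ker_le_range φ.ker.subtype φ
    (by rw [Subgroup.range_subtype])
end

section
/- For any prime p and any natural number m ≥ 1, the general linear group GL_m(𝔽_p) of invertible m×m matrices over the field with p elements is solvable if and only if m = 1, or m = 2 and p ≤ 3. -/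
set_option maxRecDepth 100000
set_option maxHeartbeats 4000000
set_option linter.unreachableTactic false
set_option linter.unusedTactic false

open Matrix
open scoped commutatorElement

/-! ### Generic helpers -/

/-- Build a `Perm` hom from a function-level action. -/
def mkPermHom {α β : Type*} [DecidableEq β]
    (F : (α → α) → (β → β))
    (hmul : ∀ f : α → α, Function.Bijective f → ∀ g : α → α, Function.Bijective g →
      F (f ∘ g) = F f ∘ F g)
    (hid : F id = id) : Equiv.Perm α →* Equiv.Perm β where
  toFun σ :=
    { toFun := F σ
      invFun := F σ.symm
      left_inv := fun x => by
        have h1 : F (⇑σ.symm ∘ ⇑σ) = F ⇑σ.symm ∘ F ⇑σ :=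
          hmul _ σ.symm.bijective _ σ.bijective
        have h2 : (⇑σ.symm ∘ ⇑σ) = id := funext σ.symm_apply_apply
        have := h1.symm.trans (by rw [h2, hid])
        exact congrFun this x
      right_inv := fun x => by
        have h1 : F (⇑σ ∘ ⇑σ.symm) = F ⇑σ ∘ F ⇑σ.symm :=
          hmul _ σ.bijective _ σ.symm.bijective
        have h2 : (⇑σ ∘ ⇑σ.symm) = id := funext σ.apply_symm_apply
        have := h1.symm.trans (by rw [h2, hid])
        exact congrFun this x }
  map_one' := Equiv.ext fun x => congrFun hid x
  map_mul' σ τ := Equiv.ext fun x => by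
    have : F (⇑σ ∘ ⇑τ) = F ⇑σ ∘ F ⇑τ := hmul _ σ.bijective _ τ.bijective
    exact congrFun this x

lemma solvable_of_hom_ker_comm {G G' : Type*} [Group G] [Group G'] (φ : G →* G')
    (hker : ∀ a b : G, φ a = 1 → φ b = 1 → a * b = b * a) [Group.IsSolvable G'] :
    IsSolvable G := by
  haveI : Group.IsSolvable φ.ker := isSolvable_of_comm fun ⟨a, ha⟩ ⟨b, hb⟩ =>
    Subtype.ext (hker a b ha hb)
  exact solvable_of_ker_le_range φ.ker.subtype φ (by rw [Subgroup.range_subtype])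

lemma perm_solvable_step {α β : Type*} [DecidableEq β]
    (F : (α → α) → (β → β))
    (hmul : ∀ f : α → α, Function.Bijective f → ∀ g : α → α, Function.Bijective g →
      F (f ∘ g) = F f ∘ F g)
    (hid : F id = id)
    (hker : ∀ f : α → α, Function.Bijective f → ∀ g : α → α, Function.Bijective g →
      F f = id → F g = id → f ∘ g = g ∘ f)
    [Group.IsSolvable (Equiv.Perm β)] : IsSolvable (Equiv.Perm α) := by
  apply solvable_of_hom_ker_comm (mkPermHom F hmul hid)
  intro a b ha hb
  have ha' : F ⇑a = id := funext fun x => Equiv.ext_iff.mp ha x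
  have hb' : F ⇑b = id := funext fun x => Equiv.ext_iff.mp hb x
  exact Equiv.ext fun x => congrFun (hker ⇑a a.bijective ⇑b b.bijective ha' hb') x

/-! ### Solvability of permutation groups on at most 4 letters -/

def ptbl : Fin 3 → Fin 4 → Fin 4 := ![![1,0,3,2], ![2,3,0,1], ![3,2,1,0]]

def F4 (f : Fin 4 → Fin 4) : Fin 3 → Fin 3 := fun i =>
  if ptbl 0 (f 0) = f (ptbl i 0) then 0
  else if ptbl 1 (f 0) = f (ptbl i 0) then 1 else 2

def F3 (f : Fin 3 → Fin 3) : Fin 2 → Fin 2 :=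
  if f = ![0,1,2] ∨ f = ![1,2,0] ∨ f = ![2,0,1] then id else ![1,0]

def pm : Fin 24 → Fin 4 → Fin 4 := ![![0,1,2,3], ![0,1,3,2], ![0,2,1,3], ![0,2,3,1], ![0,3,1,2], ![0,3,2,1], ![1,0,2,3], ![1,0,3,2], ![1,2,0,3], ![1,2,3,0], ![1,3,0,2], ![1,3,2,0], ![2,0,1,3], ![2,0,3,1], ![2,1,0,3], ![2,1,3,0], ![2,3,0,1], ![2,3,1,0], ![3,0,1,2], ![3,0,2,1], ![3,1,0,2], ![3,1,2,0], ![3,2,0,1], ![3,2,1,0]]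

lemma pm_complete : ∀ f : Fin 4 → Fin 4, Function.Bijective f → ∃ i, pm i = f := by decide
lemma pm_mul : ∀ i j, F4 (pm i ∘ pm j) = F4 (pm i) ∘ F4 (pm j) := by decide
lemma pm_ker : ∀ i j, F4 (pm i) = id → F4 (pm j) = id → pm i ∘ pm j = pm j ∘ pm i := by decide
lemma F4_id : F4 id = id := by decide

lemma permFin2_solvable : IsSolvable (Equiv.Perm (Fin 2)) :=
  isSolvable_of_comm (by decide)

lemma permFin3_solvable : IsSolvable (Equiv.Perm (Fin 3)) := by
  haveI : Group.IsSolvable (Equiv.Perm (Fin 2)) := permFin2_solvable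
  exact perm_solvable_step F3 (by decide) (by decide) (by decide)

lemma permFin4_solvable : IsSolvable (Equiv.Perm (Fin 4)) := by
  haveI : Group.IsSolvable (Equiv.Perm (Fin 3)) := permFin3_solvable
  refine perm_solvable_step F4 ?_ F4_id ?_
  · intro f hf g hg
    obtain ⟨i, rfl⟩ := pm_complete f hf
    obtain ⟨j, rfl⟩ := pm_complete g hg
    exact pm_mul i j
  · intro f hf g hg
    obtain ⟨i, rfl⟩ := pm_complete f hf
    obtain ⟨j, rfl⟩ := pm_complete g hg
    exact pm_ker i j

/-! ### A solvability criterion for `GL₂` over `ZMod p` -/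

lemma mul_entries {R : Type*} [CommRing R] (A B : Matrix (Fin 2) (Fin 2) R) (i j : Fin 2) :
    (A * B) i j = A i 0 * B 0 j + A i 1 * B 1 j := by
  rw [Matrix.mul_apply, Fin.sum_univ_two]

lemma GL2_det_ne {p : ℕ} [Fact p.Prime] (A : GL (Fin 2) (ZMod p)) :
    (A : Matrix (Fin 2) (Fin 2) (ZMod p)).det ≠ 0 := by
  intro h
  have h1 : ((A : Matrix (Fin 2) (Fin 2) (ZMod p)) * ((A⁻¹ : GL (Fin 2) (ZMod p)) :
      Matrix (Fin 2) (Fin 2) (ZMod p))).det = 1 := by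
    rw [show ((A : Matrix (Fin 2) (Fin 2) (ZMod p)) * _) = ((A * A⁻¹ : GL (Fin 2) (ZMod p)) :
      Matrix (Fin 2) (Fin 2) (ZMod p)) from rfl, mul_inv_cancel]
    simp
  rw [Matrix.det_mul, h, zero_mul] at h1
  exact zero_ne_one h1

lemma GL2_solvable_builder {p : ℕ} [Fact p.Prime]
    (f : Matrix (Fin 2) (Fin 2) (ZMod p) → (Fin 4 → Fin 4))
    (hmul : ∀ A B : Matrix (Fin 2) (Fin 2) (ZMod p),
      A.det ≠ 0 → B.det ≠ 0 → f (A * B) = f A ∘ f B)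
    (hone : f 1 = id)
    (hker : ∀ A B : Matrix (Fin 2) (Fin 2) (ZMod p),
      A.det ≠ 0 → B.det ≠ 0 → f A = id → f B = id → A * B = B * A) :
    IsSolvable (GL (Fin 2) (ZMod p)) := by
  haveI : Group.IsSolvable (Equiv.Perm (Fin 4)) := permFin4_solvable
  let φ : GL (Fin 2) (ZMod p) →* Equiv.Perm (Fin 4) :=
    { toFun := fun A =>
        { toFun := f A
          invFun := f (A⁻¹ : GL (Fin 2) (ZMod p))
          left_inv := fun x => by
            have h1 := hmul _ _ (GL2_det_ne A⁻¹) (GL2_det_ne A)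
            have h2 : ((A⁻¹ : GL (Fin 2) (ZMod p)) : Matrix (Fin 2) (Fin 2) (ZMod p)) *
                (A : Matrix (Fin 2) (Fin 2) (ZMod p)) = 1 := by
              rw [show _ * _ = ((A⁻¹ * A : GL (Fin 2) (ZMod p)) :
                Matrix (Fin 2) (Fin 2) (ZMod p)) from rfl, inv_mul_cancel]; rfl
            rw [h2, hone] at h1
            exact (congrFun h1.symm x :)
          right_inv := fun x => by
            have h1 := hmul _ _ (GL2_det_ne A) (GL2_det_ne A⁻¹)
            have h2 : (A : Matrix (Fin 2) (Fin 2) (ZMod p)) *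
                ((A⁻¹ : GL (Fin 2) (ZMod p)) : Matrix (Fin 2) (Fin 2) (ZMod p)) = 1 := by
              rw [show _ * _ = ((A * A⁻¹ : GL (Fin 2) (ZMod p)) :
                Matrix (Fin 2) (Fin 2) (ZMod p)) from rfl, mul_inv_cancel]; rfl
            rw [h2, hone] at h1
            exact (congrFun h1.symm x :) }
      map_one' := Equiv.ext fun x => congrFun hone x
      map_mul' := fun A B => Equiv.ext fun x =>
        congrFun (hmul _ _ (GL2_det_ne A) (GL2_det_ne B)) x }
  apply solvable_of_hom_ker_comm φ
  intro a b ha hb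
  have ha' : f (a : Matrix (Fin 2) (Fin 2) (ZMod p)) = id :=
    funext fun x => Equiv.ext_iff.mp ha x
  have hb' : f (b : Matrix (Fin 2) (Fin 2) (ZMod p)) = id :=
    funext fun x => Equiv.ext_iff.mp hb x
  exact Units.ext (hker _ _ (GL2_det_ne a) (GL2_det_ne b) ha' hb')

/-! ### The projective-line action, described by tables -/

def cls {p : ℕ} (u v : ZMod p) : Fin 4 :=
  if u = 0 ∧ v = 0 then 3
  else if v = 0 then 0
  else if u = 0 then 1
  else if u = v then 2 else 3

def act' {p : ℕ} (x y : Fin 4 → ZMod p) (a b c d : ZMod p) : Fin 4 → Fin 4 := fun i =>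
  cls (a * x i + b * y i) (c * x i + d * y i)

lemma GL2_solvable_of_tables {p : ℕ} [Fact p.Prime] (x y : Fin 4 → ZMod p)
    (hmul' : ∀ a b c d : ZMod p, a*d - b*c ≠ 0 → ∀ e f g h : ZMod p, e*h - f*g ≠ 0 →
      act' x y (a*e+b*g) (a*f+b*h) (c*e+d*g) (c*f+d*h) =
        act' x y a b c d ∘ act' x y e f g h)
    (hone' : act' x y 1 0 0 1 = id)
    (hker' : ∀ a b c d : ZMod p, a*d - b*c ≠ 0 → ∀ e f g h : ZMod p, e*h - f*g ≠ 0 →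
      act' x y a b c d = id → act' x y e f g h = id →
      (a*e+b*g = e*a+f*c ∧ a*f+b*h = e*b+f*d ∧ c*e+d*g = g*a+h*c ∧ c*f+d*h = g*b+h*d)) :
    IsSolvable (GL (Fin 2) (ZMod p)) := by
  apply GL2_solvable_builder (fun A => act' x y (A 0 0) (A 0 1) (A 1 0) (A 1 1))
  · intro A B hA hB
    rw [Matrix.det_fin_two] at hA hB
    have e00 := mul_entries A B 0 0
    have e01 := mul_entries A B 0 1
    have e10 := mul_entries A B 1 0
    have e11 := mul_entries A B 1 1
    simp only [e00, e01, e10, e11]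
    exact hmul' _ _ _ _ hA _ _ _ _ hB
  · show act' x y ((1 : Matrix (Fin 2) (Fin 2) (ZMod p)) 0 0) _ _ _ = id
    rw [Matrix.one_apply_eq, Matrix.one_apply_eq,
      Matrix.one_apply_ne (by decide), Matrix.one_apply_ne (by decide)]
    exact hone'
  · intro A B hA hB hfA hfB
    rw [Matrix.det_fin_two] at hA hB
    obtain ⟨h1, h2, h3, h4⟩ := hker' _ _ _ _ hA _ _ _ _ hB hfA hfB
    ext i j
    fin_cases i <;> fin_cases j <;>
      simp only [mul_entries] <;> assumption

def x2 : Fin 4 → ZMod 2 := ![1,0,1,0]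
def y2 : Fin 4 → ZMod 2 := ![0,1,1,0]
def x3 : Fin 4 → ZMod 3 := ![1,0,1,1]
def y3 : Fin 4 → ZMod 3 := ![0,1,1,2]

lemma act2_mul : ∀ a b c d : ZMod 2, a*d - b*c ≠ 0 → ∀ e f g h : ZMod 2, e*h - f*g ≠ 0 →
    act' x2 y2 (a*e+b*g) (a*f+b*h) (c*e+d*g) (c*f+d*h) =
      act' x2 y2 a b c d ∘ act' x2 y2 e f g h := by decide
lemma act2_one : act' x2 y2 1 0 0 1 = id := by decide
lemma act2_ker : ∀ a b c d : ZMod 2, a*d - b*c ≠ 0 → ∀ e f g h : ZMod 2, e*h - f*g ≠ 0 →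
    act' x2 y2 a b c d = id → act' x2 y2 e f g h = id →
    (a*e+b*g = e*a+f*c ∧ a*f+b*h = e*b+f*d ∧ c*e+d*g = g*a+h*c ∧ c*f+d*h = g*b+h*d) := by
  decide

lemma act3_mul : ∀ a b c d : ZMod 3, a*d - b*c ≠ 0 → ∀ e f g h : ZMod 3, e*h - f*g ≠ 0 →
    act' x3 y3 (a*e+b*g) (a*f+b*h) (c*e+d*g) (c*f+d*h) =
      act' x3 y3 a b c d ∘ act' x3 y3 e f g h := by decide
lemma act3_one : act' x3 y3 1 0 0 1 = id := by decide
lemma act3_ker : ∀ a b c d : ZMod 3, a*d - b*c ≠ 0 → ∀ e f g h : ZMod 3, e*h - f*g ≠ 0 →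
    act' x3 y3 a b c d = id → act' x3 y3 e f g h = id →
    (a*e+b*g = e*a+f*c ∧ a*f+b*h = e*b+f*d ∧ c*e+d*g = g*a+h*c ∧ c*f+d*h = g*b+h*d) := by
  decide

lemma GL2_p2_solvable : IsSolvable (GL (Fin 2) (ZMod 2)) :=
  GL2_solvable_of_tables x2 y2 act2_mul act2_one act2_ker

lemma GL2_p3_solvable : IsSolvable (GL (Fin 2) (ZMod 3)) :=
  GL2_solvable_of_tables x3 y3 act3_mul act3_one act3_ker

/-! ### `GL₁` is solvable -/

lemma GL1_solvable (p : ℕ) [Fact p.Prime] : IsSolvable (GL (Fin 1) (ZMod p)) := by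
  apply isSolvable_of_comm
  intro a b
  apply Units.ext
  show (a : Matrix (Fin 1) (Fin 1) (ZMod p)) * b = (b : Matrix (Fin 1) (Fin 1) (ZMod p)) * a
  ext i j
  rw [Matrix.mul_apply, Matrix.mul_apply, Fin.sum_univ_one, Fin.sum_univ_one,
    Subsingleton.elim i 0, Subsingleton.elim j 0, mul_comm]

/-! ### Non-solvability: `m ≥ 3` -/

lemma stdBasisMatrix_neg' {R : Type*} [CommRing R] {m : ℕ} (a b : Fin m) (d : R) :
    Matrix.single a b (-d) = -Matrix.single a b d := by
  ext x y
  simp only [Matrix.single, Matrix.neg_apply, Matrix.of_apply]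
  split <;> simp

lemma tvu_comm_mat {R : Type*} [CommRing R] {m : ℕ} (i j k : Fin m)
    (hij : i ≠ j) (hik : i ≠ k) (hkj : k ≠ j) (c : R) :
    Matrix.transvection i k c * Matrix.transvection k j 1 *
      Matrix.transvection i k (-c) * Matrix.transvection k j (-1) =
    Matrix.transvection i j c := by
  simp only [Matrix.transvection]
  noncomm_ring
  simp [Ne.symm hij, Ne.symm hik, Ne.symm hkj, hij, hik, hkj]
  simp only [stdBasisMatrix_neg']
  abel

/-- A transvection as an element of `GL`. -/
def tvu {R : Type*} [CommRing R] {m : ℕ} (i j : Fin m) (c : R) :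
    GL (Fin m) R :=
  if hij : i = j then 1 else
  ⟨Matrix.transvection i j c, Matrix.transvection i j (-c),
    by rw [Matrix.transvection_mul_transvection_same _ _ hij, add_neg_cancel,
      Matrix.transvection_zero],
    by rw [Matrix.transvection_mul_transvection_same _ _ hij, neg_add_cancel,
      Matrix.transvection_zero]⟩

lemma tvu_val {R : Type*} [CommRing R] {m : ℕ} {i j : Fin m} (hij : i ≠ j) (c : R) :
    (tvu i j c : Matrix (Fin m) (Fin m) R) = Matrix.transvection i j c := by
  rw [tvu, dif_neg hij]

lemma tvu_inv_val {R : Type*} [CommRing R] {m : ℕ} {i j : Fin m} (hij : i ≠ j) (c : R) :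
    ((tvu i j c)⁻¹ : GL (Fin m) R) = (Matrix.transvection i j (-c) :
      Matrix (Fin m) (Fin m) R) := by
  rw [tvu, dif_neg hij]
  rfl

lemma tvu_commElt {R : Type*} [CommRing R] {m : ℕ} (i j k : Fin m)
    (hij : i ≠ j) (hik : i ≠ k) (hkj : k ≠ j) (c : R) :
    ⁅tvu i k c, tvu k j (1 : R)⁆ = tvu i j c := by
  apply Units.ext
  rw [commutatorElement_def]
  show ((tvu i k c : GL (Fin m) R) : Matrix (Fin m) (Fin m) R) * _ * _ * _ = _
  rw [tvu_val hik, tvu_val hkj, tvu_inv_val hik, tvu_inv_val hkj, tvu_val hij]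
  exact tvu_comm_mat i j k hij hik hkj c

lemma tvu_ne_one {R : Type*} [CommRing R] [Nontrivial R] {m : ℕ} {i j : Fin m}
    (hij : i ≠ j) : tvu i j (1 : R) ≠ 1 := by
  intro h
  have h2 := congrArg (fun u : GL (Fin m) R => (u : Matrix (Fin m) (Fin m) R) i j) h
  simp only [tvu_val hij] at h2
  rw [Matrix.transvection, Matrix.add_apply, Matrix.one_apply_ne hij,
    Matrix.single_apply_same, zero_add] at h2
  change (1 : R) = (1 : Matrix (Fin m) (Fin m) R) i j at h2
  rw [Matrix.one_apply_ne hij] at h2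
  exact one_ne_zero h2

lemma GL_not_solvable_of_three_le (p : ℕ) [Fact p.Prime] (m : ℕ) (hm : 3 ≤ m) :
    ¬IsSolvable (GL (Fin m) (ZMod p)) := by
  set S : Set (GL (Fin m) (ZMod p)) :=
    {g | ∃ i j : Fin m, i ≠ j ∧ ∃ c : ZMod p, g = tvu i j c} with hS
  have key : ∀ n, Subgroup.closure S ≤ derivedSeries (GL (Fin m) (ZMod p)) n := by
    intro n
    induction n with
    | zero => exact le_top
    | succ n ih =>
      rw [derivedSeries_succ]
      rw [Subgroup.closure_le]
      rintro g ⟨i, j, hij, c, rfl⟩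
      obtain ⟨k, hk⟩ : ∃ k : Fin m, k ∉ ({i, j} : Finset (Fin m)) := by
        by_contra hcon
        push_neg at hcon
        have huniv : ({i, j} : Finset (Fin m)) = Finset.univ :=
          Finset.eq_univ_iff_forall.mpr hcon
        have hcard := congrArg Finset.card huniv
        have h2 : ({i, j} : Finset (Fin m)).card ≤ 2 :=
          le_trans (Finset.card_insert_le _ _) (by simp)
        rw [Finset.card_univ, Fintype.card_fin] at hcard
        omega
      simp only [Finset.mem_insert, Finset.mem_singleton, not_or] at hk
      obtain ⟨hki, hkj⟩ := hk
      rw [SetLike.mem_coe, ← tvu_commElt i j k hij (Ne.symm hki) hkj c]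
      exact Subgroup.commutator_mem_commutator
        (ih (Subgroup.subset_closure ⟨i, k, Ne.symm hki, c, rfl⟩))
        (ih (Subgroup.subset_closure ⟨k, j, hkj, 1, rfl⟩))
  have h01 : (⟨0, by omega⟩ : Fin m) ≠ ⟨1, by omega⟩ := by
    simp [Fin.mk.injEq]
  exact not_solvable_of_mem_derivedSeries (tvu_ne_one h01)
    (fun n => key n (Subgroup.subset_closure ⟨_, _, h01, 1, rfl⟩))

/-! ### Non-solvability: `m = 2`, `p ≥ 5` -/

section GL2NotSolvable

variable {p : ℕ} [Fact p.Prime]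

def T01 (c : ZMod p) : GL (Fin 2) (ZMod p) :=
  ⟨!![1, c; 0, 1], !![1, -c; 0, 1],
    by ext i j; fin_cases i <;> fin_cases j <;>
      simp [Matrix.mul_apply, Fin.sum_univ_two, Matrix.one_apply],
    by ext i j; fin_cases i <;> fin_cases j <;>
      simp [Matrix.mul_apply, Fin.sum_univ_two, Matrix.one_apply]⟩

def T10 (c : ZMod p) : GL (Fin 2) (ZMod p) :=
  ⟨!![1, 0; c, 1], !![1, 0; -c, 1],
    by ext i j; fin_cases i <;> fin_cases j <;>
      simp [Matrix.mul_apply, Fin.sum_univ_two, Matrix.one_apply],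
    by ext i j; fin_cases i <;> fin_cases j <;>
      simp [Matrix.mul_apply, Fin.sum_univ_two, Matrix.one_apply]⟩

def Dg (a u : ZMod p) (hu : a * u = 1) (hu' : u * a = 1) : GL (Fin 2) (ZMod p) :=
  ⟨!![a, 0; 0, u], !![u, 0; 0, a],
    by ext i j; fin_cases i <;> fin_cases j <;>
      simp [Matrix.mul_apply, Fin.sum_univ_two, Matrix.one_apply, hu, hu'],
    by ext i j; fin_cases i <;> fin_cases j <;>
      simp [Matrix.mul_apply, Fin.sum_univ_two, Matrix.one_apply, hu, hu']⟩

lemma Dg_decomp (a u : ZMod p) (hu : a * u = 1) (hu' : u * a = 1) :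
    Dg a u hu hu' = T01 a * T10 (-u) * T01 a * T01 (-1) * T10 1 * T01 (-1) := by
  apply Units.ext
  show (!![a, 0; 0, u] : Matrix (Fin 2) (Fin 2) (ZMod p)) = _
  show _ = !![1, a; 0, 1] * !![1, 0; -u, 1] * !![1, a; 0, 1] * !![1, -1; 0, 1] *
    !![1, 0; 1, 1] * !![1, -1; 0, 1]
  ext i j
  fin_cases i <;> fin_cases j <;>
    simp [Matrix.mul_apply, Fin.sum_univ_two] <;>
    first
      | ring1
      | linear_combination hu
      | linear_combination hu'
      | linear_combination a * hu
      | linear_combination a * hu'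
      | linear_combination u * hu
      | linear_combination u * hu'
      | linear_combination (a*a) * hu'
      | linear_combination (a + 1) * hu'
      | linear_combination (a - 1) * hu'
      | linear_combination (-a) * hu'
      | linear_combination (-1 : ZMod p) * hu'

lemma comm01 (a u t : ZMod p) (hu : a * u = 1) (hu' : u * a = 1) :
    ⁅Dg a u hu hu', T01 t⁆ = T01 (a * a * t - t) := by
  apply Units.ext
  rw [commutatorElement_def]
  show (!![a, 0; 0, u] : Matrix (Fin 2) (Fin 2) (ZMod p)) * !![1, t; 0, 1] *
    !![u, 0; 0, a] * !![1, -t; 0, 1] = !![1, a * a * t - t; 0, 1]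
  ext i j
  fin_cases i <;> fin_cases j <;>
    simp [Matrix.mul_apply, Fin.sum_univ_two] <;>
    first
      | ring1
      | linear_combination hu
      | linear_combination hu'
      | linear_combination t * hu
      | linear_combination (-t) * hu
      | linear_combination (a*t) * hu
      | linear_combination (a*t) * hu'
      | linear_combination (-(a*t)) * hu
      | linear_combination (-(a*t)) * hu'

lemma comm10 (a u t : ZMod p) (hu : a * u = 1) (hu' : u * a = 1) :
    ⁅(Dg a u hu hu')⁻¹, T10 t⁆ = T10 (a * a * t - t) := by
  apply Units.ext
  rw [commutatorElement_def, inv_inv]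
  show (!![u, 0; 0, a] : Matrix (Fin 2) (Fin 2) (ZMod p)) * !![1, 0; t, 1] *
    !![a, 0; 0, u] * !![1, 0; -t, 1] = !![1, 0; a * a * t - t, 1]
  ext i j
  fin_cases i <;> fin_cases j <;>
    simp [Matrix.mul_apply, Fin.sum_univ_two] <;>
    first
      | ring1
      | linear_combination hu
      | linear_combination hu'
      | linear_combination t * hu
      | linear_combination (-t) * hu
      | linear_combination t * hu'
      | linear_combination (-t) * hu'
      | linear_combination (a*t) * hu
      | linear_combination (a*t) * hu'
      | linear_combination (-(a*t)) * hu
      | linear_combination (-(a*t)) * hu'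

lemma GL2_not_solvable (hp : 4 ≤ p) : ¬IsSolvable (GL (Fin 2) (ZMod p)) := by
  obtain ⟨a, ha⟩ : ∃ a : ZMod p, a ∉ ({0, 1, -1} : Finset (ZMod p)) := by
    by_contra hcon
    push_neg at hcon
    have huniv : ({0, 1, -1} : Finset (ZMod p)) = Finset.univ :=
      Finset.eq_univ_iff_forall.mpr hcon
    have hcard := congrArg Finset.card huniv
    have h3 : ({0, 1, -1} : Finset (ZMod p)).card ≤ 3 :=
      le_trans (Finset.card_insert_le _ _)
        (by simpa using Nat.add_le_add_right (Finset.card_insert_le (1 : ZMod p) {-1}) 1)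
    rw [Finset.card_univ, ZMod.card] at hcard
    omega
  simp only [Finset.mem_insert, Finset.mem_singleton, not_or] at ha
  obtain ⟨ha0, ha1, ham1⟩ := ha
  set u : ZMod p := a⁻¹ with hudef
  have hu : a * u = 1 := mul_inv_cancel₀ ha0
  have hu' : u * a = 1 := by rw [mul_comm]; exact hu
  have hq : a * a - 1 ≠ 0 := by
    intro h
    rcases mul_self_eq_one_iff.mp (by linear_combination h) with h1 | h1
    · exact ha1 h1
    · exact ham1 h1
  set S : Set (GL (Fin 2) (ZMod p)) :=
    {g | (∃ c, g = T01 c) ∨ (∃ c, g = T10 c)} with hSdef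
  have hDa : Dg a u hu hu' ∈ Subgroup.closure S := by
    rw [Dg_decomp]
    refine Subgroup.mul_mem _ (Subgroup.mul_mem _ (Subgroup.mul_mem _ (Subgroup.mul_mem _
      (Subgroup.mul_mem _ ?_ ?_) ?_) ?_) ?_) ?_ <;>
      apply Subgroup.subset_closure
    · exact Or.inl ⟨a, rfl⟩
    · exact Or.inr ⟨-u, rfl⟩
    · exact Or.inl ⟨a, rfl⟩
    · exact Or.inl ⟨-1, rfl⟩
    · exact Or.inr ⟨1, rfl⟩
    · exact Or.inl ⟨-1, rfl⟩
  have key : ∀ n, Subgroup.closure S ≤ derivedSeries (GL (Fin 2) (ZMod p)) n := by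
    intro n
    induction n with
    | zero => exact le_top
    | succ n ih =>
      rw [derivedSeries_succ, Subgroup.closure_le]
      rintro g (⟨t, rfl⟩ | ⟨t, rfl⟩)
      · have ht : a * a * (t / (a * a - 1)) - (t / (a * a - 1)) = t := by
          rw [show a * a * (t / (a * a - 1)) - (t / (a * a - 1)) = (a * a - 1) * t / (a * a - 1) by ring]
          exact mul_div_cancel_left₀ t hq
        rw [SetLike.mem_coe, ← ht, ← comm01 a u _ hu hu']
        exact Subgroup.commutator_mem_commutator (ih hDa)
          (ih (Subgroup.subset_closure (Or.inl ⟨_, rfl⟩)))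
      · have ht : a * a * (t / (a * a - 1)) - (t / (a * a - 1)) = t := by
          rw [show a * a * (t / (a * a - 1)) - (t / (a * a - 1)) = (a * a - 1) * t / (a * a - 1) by ring]
          exact mul_div_cancel_left₀ t hq
        rw [SetLike.mem_coe, ← ht, ← comm10 a u _ hu hu']
        exact Subgroup.commutator_mem_commutator
          ((derivedSeries (GL (Fin 2) (ZMod p)) n).inv_mem (ih hDa))
          (ih (Subgroup.subset_closure (Or.inr ⟨_, rfl⟩)))
  refine not_solvable_of_mem_derivedSeries (g := T01 1) ?_
    (fun n => key n (Subgroup.subset_closure (Or.inl ⟨1, rfl⟩)))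
  intro h
  have h2 := congrArg (fun g : GL (Fin 2) (ZMod p) =>
    (g : Matrix (Fin 2) (Fin 2) (ZMod p)) 0 1) h
  simp only [T01] at h2
  rw [show ((1 : GL (Fin 2) (ZMod p)) : Matrix (Fin 2) (Fin 2) (ZMod p)) 0 1 =
    0 from by simp] at h2
  simp at h2

end GL2NotSolvable

/-- For a prime `p` and `m ≥ 1`, the general linear group `GL_m(𝔽_p)` of invertible
`m × m` matrices over the field `ℤ/pℤ` is solvable if and only if `m = 1`, or `m = 2`
and `p ≤ 3`. -/
theorem GL_solvable_iff
    (p : ℕ) [Fact p.Prime] (m : ℕ) (hm : 1 ≤ m) :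
    IsSolvable (GL (Fin m) (ZMod p)) ↔ m = 1 ∨ (m = 2 ∧ p ≤ 3) := by
  constructor
  · intro hs
    by_contra hc
    push_neg at hc
    obtain ⟨h1, h2⟩ := hc
    rcases lt_or_ge m 3 with hm3 | hm3
    · have hm2 : m = 2 := by omega
      subst hm2
      have hp : 4 ≤ p := by
        have := h2 rfl
        omega
      exact GL2_not_solvable hp hs
    · exact GL_not_solvable_of_three_le p m hm3 hs
  · rintro (rfl | ⟨rfl, hp⟩)
    · exact GL1_solvable p
    · have hp2 : p = 2 ∨ p = 3 := by
        have := (Fact.out : p.Prime).two_le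
        omega
      rcases hp2 with rfl | rfl
      · exact GL2_p2_solvable
      · exact GL2_p3_solvable
end

section
/- Let p be a prime, let m = 1 or m = 2, and let G be a finite insolvable group whose order is cube-free, i.e. no cube of a prime divides |G|. Then the kernel of any group homomorphism from G to GL_m(𝔽_p) is insolvable. -/
open Matrix

section FixedPoints

variable {P : Type*} [Group P]

/-- The subgroup of points fixed by an automorphism. -/
private def fixSubgroup (σ : MulAut P) : Subgroup P where
  carrier := {a | σ a = a}
  one_mem' := map_one σ
  mul_mem' := by
    intro a b ha hb
    simp only [Set.mem_setOf_eq] at *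
    rw [_root_.map_mul, ha, hb]
  inv_mem' := by
    intro a ha
    simp only [Set.mem_setOf_eq] at *
    rw [_root_.map_inv, ha]

private lemma mem_fixSubgroup_iff (σ : MulAut P) (a : P) : a ∈ fixSubgroup σ ↔ σ a = a :=
  Iff.rfl

private lemma fix_modEq [Finite P] (σ : MulAut P) {r : ℕ} (hr : r.Prime)
    (hσ : orderOf σ = r) :
    Nat.card P ≡ Nat.card (fixSubgroup σ) [MOD r] := by
  haveI : Fact r.Prime := ⟨hr⟩
  set S : Subgroup (MulAut P) := Subgroup.zpowers σ with hS
  have hcardS : Nat.card S = r ^ 1 := by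
    rw [pow_one, hS, Nat.card_zpowers, hσ]
  have hpS : IsPGroup r S := IsPGroup.of_card hcardS
  have key : Nat.card P ≡ Nat.card (MulAction.fixedPoints S P) [MOD r] :=
    hpS.card_modEq_card_fixedPoints P
  have hfixaux : ∀ (k : ℕ) (a : P), σ a = a → (σ ^ k) a = a := by
    intro k a ha
    induction k with
    | zero => simp
    | succ n ihn => rw [pow_succ, MulAut.mul_apply, ha, ihn]
  have hfixaux' : ∀ (k : ℤ) (a : P), σ a = a → (σ ^ k) a = a := by
    intro k a ha
    cases k with
    | ofNat n => simpa using hfixaux n a ha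
    | negSucc n =>
      rw [zpow_negSucc]
      have h1 : (σ ^ (n + 1)) a = a := hfixaux (n + 1) a ha
      have h2 := congrArg (fun x => (σ ^ (n + 1))⁻¹ x) h1
      have h3 : (σ ^ (n + 1))⁻¹ ((σ ^ (n + 1)) a) = a := by
        simp
      rw [h3] at h2
      exact h2.symm
  have hiff : ∀ a : P, a ∈ MulAction.fixedPoints S P ↔ a ∈ fixSubgroup σ := by
    intro a
    constructor
    · intro h
      exact h ⟨σ, Subgroup.mem_zpowers σ⟩
    · intro h g
      obtain ⟨k, hk⟩ := g.2
      have : (g : MulAut P) • a = a := by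
        rw [← hk]
        exact hfixaux' k a h
      exact this
  have : Nat.card (MulAction.fixedPoints S P) = Nat.card (fixSubgroup σ) :=
    Nat.card_congr (Equiv.subtypeEquivRight hiff)
  rwa [this] at key

end FixedPoints

section AutLemmas

/-- No automorphism of odd prime order `r > ℓ` on a group of order `ℓ^v`, `v ≤ 2`, `ℓ` odd. -/
private lemma mulAut_small_order {P : Type*} [Group P] [Finite P] {l v r : ℕ}
    (hl : l.Prime) (hl2 : l ≠ 2) (hv : v ≤ 2) (hcard : Nat.card P = l ^ v)
    (hr : r.Prime) (hr2 : r ≠ 2) (hlr : l < r) (σ : MulAut P) (hσ : orderOf σ = r) :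
    False := by
  have hmod := fix_modEq σ hr hσ
  -- card of fixed subgroup is a power of l
  have hdvd : Nat.card (fixSubgroup σ) ∣ l ^ v := hcard ▸ Subgroup.card_subgroup_dvd_card _
  obtain ⟨j, hj, hcardF⟩ := (Nat.dvd_prime_pow hl).mp hdvd
  rw [hcard, hcardF] at hmod
  by_cases hjv : j = v
  · -- fixed subgroup is everything, so σ = 1, contradicting orderOf σ = r
    have : fixSubgroup σ = ⊤ := by
      apply Subgroup.eq_top_of_card_eq
      rw [hcardF, hjv, hcard]
    have hone : σ = 1 := by
      ext a
      have ha : a ∈ fixSubgroup σ := this ▸ Subgroup.mem_top a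
      exact ha
    rw [hone, orderOf_one] at hσ
    have := hr.one_lt
    omega
  · have hjlt : j < v := lt_of_le_of_ne hj hjv
    have hle : l ^ j ≤ l ^ v := Nat.pow_le_pow_right hl.pos hj
    have hdvd2 : r ∣ l ^ v - l ^ j := (Nat.modEq_iff_dvd' hle).mp hmod.symm
    have hfactor : l ^ v - l ^ j = l ^ j * (l ^ (v - j) - 1) := by
      rw [Nat.mul_sub, mul_one, ← pow_add]
      congr 2
      omega
    rw [hfactor] at hdvd2
    rcases hr.dvd_mul.mp hdvd2 with h | h
    · -- r ∣ l ^ j forces r = l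
      have := hr.dvd_of_dvd_pow (n := j) h
      rw [Nat.prime_dvd_prime_iff_eq hr hl] at this
      omega
    · have hd : v - j = 1 ∨ v - j = 2 := by omega
      rcases hd with hd | hd
      · rw [hd, pow_one] at h
        have hlpos : 0 < l - 1 := by have := hl.two_le; omega
        have := Nat.le_of_dvd hlpos h
        omega
      · rw [hd] at h
        have hfact : l ^ 2 - 1 = (l - 1) * (l + 1) := by
          obtain ⟨s, rfl⟩ : ∃ s, l = s + 1 := ⟨l - 1, by have := hl.two_le; omega⟩
          have h1 : (s + 1) ^ 2 = s * (s + 2) + 1 := by ring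
          rw [h1]
          simp [Nat.add_sub_cancel, Nat.mul_add]
          ring
        rw [hfact] at h
        rcases hr.dvd_mul.mp h with h' | h'
        · have hlpos : 0 < l - 1 := by have := hl.two_le; omega
          have := Nat.le_of_dvd hlpos h'
          omega
        · have := Nat.le_of_dvd (by omega) h'
          have hreq : r = l + 1 := by omega
          -- l odd, so r = l + 1 is even, but r is an odd prime
          have hlodd : Odd l := hl.odd_of_ne_two hl2
          have : Even r := by
            rw [hreq]
            exact hlodd.add_one
          exact hr2 ((Nat.Prime.even_iff hr).mp this)

/-- No automorphism of odd prime order on a finite cyclic group of order dividing 4. -/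
private lemma mulAut_of_dvd_four {Q : Type*} [Group Q] [Finite Q] [IsCyclic Q]
    (h4 : Nat.card Q ∣ 4) {r : ℕ} (hr : r.Prime) (hr2 : r ≠ 2)
    (σ : MulAut Q) (hσ : orderOf σ = r) : False := by
  haveI : Finite (MulAut Q) :=
    Finite.of_injective (fun τ => (τ : Q → Q)) (fun a b hab => by
      ext x; exact congrFun hab x)
  have h := orderOf_dvd_natCard σ
  rw [hσ, IsCyclic.card_mulAut] at h
  obtain ⟨n, hn⟩ : ∃ n, Nat.card Q = n := ⟨_, rfl⟩
  rw [hn] at h h4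
  have h1 : 0 < n := hn ▸ Nat.card_pos
  have h2 : n ≤ 4 := Nat.le_of_dvd (by norm_num) h4
  have htot : r ∣ 2 := by
    interval_cases n
    · exact dvd_trans h (by decide)
    · exact dvd_trans h (by decide)
    · exact absurd h4 (by decide)
    · exact dvd_trans h (by decide)
  have := (Nat.prime_dvd_prime_iff_eq hr Nat.prime_two).mp htot
  exact hr2 this

end AutLemmas

section NC

/-- If no suitable prime-order automorphisms of an abelian Sylow subgroup exist coming from
the group, then the normalizer is contained in the centralizer. -/
private lemma normalizer_le_centralizer_aux {G : Type*} [Group G] [Finite G] {l : ℕ}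
    [Fact l.Prime] (P : Sylow l G)
    (hcomm : ∀ a b : (P : Subgroup G), a * b = b * a)
    (hkey : ∀ r : ℕ, r.Prime → r ≠ l → r ∣ Nat.card G →
      ∀ σ : MulAut (P : Subgroup G), orderOf σ = r → False) :
    (Subgroup.normalizer ((P : Subgroup G) : Set G)) ≤ Subgroup.centralizer ((P : Subgroup G) : Set G) := by
  set φ := (P : Subgroup G).normalizerMonoidHom with hφ
  -- the image of P in the kernel of φ
  have hPker : (P : Subgroup G).subgroupOf (Subgroup.normalizer ((P : Subgroup G) : Set G)) ≤ φ.ker := by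
    rw [hφ, Subgroup.normalizerMonoidHom_ker]
    have hPC : (P : Subgroup G) ≤ Subgroup.centralizer ((P : Subgroup G) : Set G) :=
      Subgroup.le_centralizer_iff_isMulCommutative.mpr ⟨⟨hcomm⟩⟩
    intro x hx
    rw [Subgroup.mem_subgroupOf] at hx ⊢
    exact hPC hx
  -- the range of φ is trivial
  have hrange : φ.range = ⊥ := by
    by_contra hne
    have hcardne : Nat.card φ.range ≠ 1 := fun h => hne (Subgroup.card_eq_one.mp h)
    set r := (Nat.card φ.range).minFac with hrdef
    have hr : r.Prime := Nat.minFac_prime hcardne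
    haveI : Fact r.Prime := ⟨hr⟩
    have hrdvd : r ∣ Nat.card φ.range := Nat.minFac_dvd _
    -- card φ.range divides card of the normalizer
    have hq : Nat.card ((Subgroup.normalizer ((P : Subgroup G) : Set G)) ⧸ φ.ker) = Nat.card φ.range :=
      Nat.card_congr (QuotientGroup.quotientKerEquivRange φ).toEquiv
    have hN : Nat.card (Subgroup.normalizer ((P : Subgroup G) : Set G))
        = Nat.card φ.range * Nat.card φ.ker := by
      rw [← hq]
      exact Subgroup.card_eq_card_quotient_mul_card_subgroup φ.ker
    have hrange_dvd_norm : Nat.card φ.range ∣ Nat.card (Subgroup.normalizer ((P : Subgroup G) : Set G)) :=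
      ⟨Nat.card φ.ker, hN⟩
    have hnorm_dvd : Nat.card (Subgroup.normalizer ((P : Subgroup G) : Set G)) ∣ Nat.card G :=
      Subgroup.card_subgroup_dvd_card _
    have hrG : r ∣ Nat.card G :=
      hrdvd.trans (hrange_dvd_norm.trans hnorm_dvd)
    -- r ≠ l
    have hrl : r ≠ l := by
      intro hrl
      -- l would divide card φ.range, giving l^(v+1) ∣ card G
      rw [hrl] at hrdvd
      set v := (Nat.card G).factorization l with hv
      have hcardP : Nat.card (P : Subgroup G) = l ^ v := P.card_eq_multiplicity
      have hPkercard : (l : ℕ) ^ v ∣ Nat.card φ.ker := by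
        have h1 : Nat.card ((P : Subgroup G).subgroupOf (Subgroup.normalizer ((P : Subgroup G) : Set G)))
            = Nat.card (P : Subgroup G) :=
          Nat.card_congr (Subgroup.subgroupOfEquivOfLe Subgroup.le_normalizer).toEquiv
        calc (l : ℕ) ^ v = Nat.card ((P : Subgroup G).subgroupOf (Subgroup.normalizer ((P : Subgroup G) : Set G))) := by
              rw [h1, hcardP]
          _ ∣ Nat.card φ.ker := Subgroup.card_dvd_of_le hPker
      have : l ^ (v + 1) ∣ Nat.card G := by
        calc l ^ (v + 1) = l * l ^ v := by ring
          _ ∣ Nat.card φ.range * Nat.card φ.ker := mul_dvd_mul hrdvd hPkercard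
          _ = Nat.card (Subgroup.normalizer ((P : Subgroup G) : Set G)) := hN.symm
          _ ∣ Nat.card G := hnorm_dvd
      exact Nat.pow_succ_factorization_not_dvd Nat.card_pos.ne' Fact.out this
    -- get an element of order r in the range, i.e. an automorphism
    obtain ⟨σ₀, hσ₀⟩ := exists_prime_orderOf_dvd_card' (G := φ.range) r hrdvd
    have hσ : orderOf (σ₀ : MulAut (P : Subgroup G)) = r := by
      rw [← hσ₀]
      exact orderOf_injective φ.range.subtype φ.range.subtype_injective σ₀
    exact hkey r hr hrl hrG (σ₀ : MulAut (P : Subgroup G)) hσ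
  -- conclude
  intro x hx
  have hker : (⟨x, hx⟩ : (Subgroup.normalizer ((P : Subgroup G) : Set G))) ∈ φ.ker := by
    rw [MonoidHom.mem_ker]
    have : φ ⟨x, hx⟩ ∈ φ.range := ⟨_, rfl⟩
    rwa [hrange, Subgroup.mem_bot] at this
  rw [hφ, Subgroup.normalizerMonoidHom_ker, Subgroup.mem_subgroupOf] at hker
  exact hker

end NC

section OddCubeFree

universe u

/-- A finite group of odd cube-free order is solvable. -/
private theorem solvable_of_odd_cubefree :
    ∀ (n : ℕ) (G : Type u) (_ : Group G) (_ : Finite G), Nat.card G = n → ¬ 2 ∣ n →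
      (∀ q : ℕ, q.Prime → ¬ q ^ 3 ∣ n) → IsSolvable G := by
  intro n
  induction n using Nat.strong_induction_on with
  | _ n ih =>
    intro G _ _ hn hodd hcf
    by_cases hn1 : n ≤ 1
    · have : Nat.card G = 1 := by have := Nat.card_pos (α := G); omega
      haveI : Subsingleton G := (Nat.card_eq_one_iff_unique.mp this).1
      exact (inferInstance : Group.IsSolvable G)
    · push_neg at hn1
      set l := n.minFac with hldef
      have hl : l.Prime := Nat.minFac_prime (by omega)
      haveI : Fact l.Prime := ⟨hl⟩
      have hldvd : l ∣ n := Nat.minFac_dvd n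
      have hl2 : l ≠ 2 := by
        intro h
        exact hodd (h ▸ hldvd)
      obtain ⟨P⟩ : Nonempty (Sylow l G) := Sylow.nonempty
      set v := (Nat.card G).factorization l with hv
      have hcardP : Nat.card (P : Subgroup G) = l ^ v := P.card_eq_multiplicity
      have hv1 : 1 ≤ v := by
        rw [hv, hn]
        exact (Nat.Prime.factorization_pos_of_dvd hl (by omega) hldvd)
      have hv2 : v ≤ 2 := by
        by_contra hgt
        push_neg at hgt
        have h3 : l ^ 3 ∣ n := by
          calc l ^ 3 ∣ l ^ v := pow_dvd_pow l (by omega)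
            _ ∣ n := hn ▸ (hv ▸ Nat.ordProj_dvd (Nat.card G) l)
        exact hcf l hl h3
      -- P is commutative
      have hcomm : ∀ a b : (P : Subgroup G), a * b = b * a := by
        rcases (by omega : v = 1 ∨ v = 2) with hveq | hveq
        · rw [hveq, pow_one] at hcardP
          haveI := isCyclic_of_prime_card hcardP
          exact fun a b => (IsCyclic.commGroup).mul_comm a b
        · rw [hveq] at hcardP
          exact IsPGroup.commutative_of_card_eq_prime_sq hcardP
      -- normalizer condition
      have hP : (Subgroup.normalizer ((P : Subgroup G) : Set G)) ≤ Subgroup.centralizer ((P : Subgroup G) : Set G) := by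
        apply normalizer_le_centralizer_aux P hcomm
        intro r hr hrl hrG σ hσ
        have hrn : r ∣ n := hn ▸ hrG
        have hr2 : r ≠ 2 := by
          intro h
          exact hodd (h ▸ hrn)
        have hlr : l < r := lt_of_le_of_ne (Nat.minFac_le_of_dvd hr.two_le hrn) (Ne.symm hrl)
        exact mulAut_small_order hl hl2 hv2 hcardP hr hr2 hlr σ hσ
      -- Burnside normal complement
      set K := (MonoidHom.transferSylow P hP).ker with hK
      have hcompl := MonoidHom.ker_transferSylow_isComplement' P hP
      have hKP : Nat.card K * Nat.card (P : Subgroup G) = Nat.card G := hcompl.card_mul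
      have hKdvd : Nat.card K ∣ n := hn ▸ Dvd.intro _ hKP
      have hKlt : Nat.card K < n := by
        have h2 : 2 ≤ Nat.card (P : Subgroup G) := by
          rw [hcardP]
          calc 2 ≤ l := hl.two_le
            _ = l ^ 1 := (pow_one l).symm
            _ ≤ l ^ v := Nat.pow_le_pow_right hl.pos hv1
        have hKpos : 0 < Nat.card K := Nat.card_pos
        calc Nat.card K < Nat.card K * Nat.card (P : Subgroup G) := by
              exact lt_mul_of_one_lt_right hKpos h2
          _ = Nat.card G := hKP
          _ = n := hn
      haveI : Group.IsSolvable K :=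
        ih (Nat.card K) hKlt K _ inferInstance rfl
          (fun h => hodd (h.trans hKdvd))
          (fun q hq h => hcf q hq (h.trans hKdvd))
      haveI : Group.IsSolvable (P : Subgroup G) := isSolvable_of_comm hcomm
      exact solvable_of_ker_le_range K.subtype (MonoidHom.transferSylow P hP)
        (by rw [Subgroup.range_subtype])

end OddCubeFree

section GL2

private lemma gl2_involution {p : ℕ} [Fact p.Prime] (hp2 : p ≠ 2)
    (A : GL (Fin 2) (ZMod p)) (h : A * A = 1)
    (hdet : Matrix.det (A : Matrix (Fin 2) (Fin 2) (ZMod p)) = 1) :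
    (A : Matrix (Fin 2) (Fin 2) (ZMod p)) = 1 ∨
      (A : Matrix (Fin 2) (Fin 2) (ZMod p)) = -1 := by
  have two_ne : (2 : ZMod p) ≠ 0 := by
    intro h2
    exact hp2 ((Nat.prime_dvd_prime_iff_eq (Fact.out) Nat.prime_two).mp
      ((ZMod.natCast_eq_zero_iff 2 p).mp (by exact_mod_cast h2)))
  set a : Matrix (Fin 2) (Fin 2) (ZMod p) := (A : Matrix (Fin 2) (Fin 2) (ZMod p)) with ha
  have hmul : a * a = 1 := by
    have := congrArg (Units.val) h
    rwa [Units.val_mul, Units.val_one] at this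
  have h00 : a 0 0 * a 0 0 + a 0 1 * a 1 0 = 1 := by
    have := congrFun (congrFun (congrArg (fun M => M) hmul) 0) 0
    simpa [Matrix.mul_apply, Fin.sum_univ_two, Matrix.one_apply] using this
  have h01 : a 0 0 * a 0 1 + a 0 1 * a 1 1 = 0 := by
    have := congrFun (congrFun (congrArg (fun M => M) hmul) 0) 1
    simpa [Matrix.mul_apply, Fin.sum_univ_two, Matrix.one_apply] using this
  have h10 : a 1 0 * a 0 0 + a 1 1 * a 1 0 = 0 := by
    have := congrFun (congrFun (congrArg (fun M => M) hmul) 1) 0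
    simpa [Matrix.mul_apply, Fin.sum_univ_two, Matrix.one_apply] using this
  have h11 : a 1 0 * a 0 1 + a 1 1 * a 1 1 = 1 := by
    have := congrFun (congrFun (congrArg (fun M => M) hmul) 1) 1
    simpa [Matrix.mul_apply, Fin.sum_univ_two, Matrix.one_apply] using this
  have hdet2 : a 0 0 * a 1 1 - a 0 1 * a 1 0 = 1 := by
    rw [← Matrix.det_fin_two]
    exact hdet
  by_cases htr : a 0 0 + a 1 1 = 0
  · exfalso
    apply two_ne
    linear_combination -h00 - hdet2 + a 0 0 * htr
  · have hy : a 0 1 = 0 := by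
      have hfac : a 0 1 * (a 0 0 + a 1 1) = 0 := by linear_combination h01
      rcases mul_eq_zero.mp hfac with h' | h'
      · exact h'
      · exact absurd h' htr
    have hz : a 1 0 = 0 := by
      have hfac : a 1 0 * (a 0 0 + a 1 1) = 0 := by linear_combination h10
      rcases mul_eq_zero.mp hfac with h' | h'
      · exact h'
      · exact absurd h' htr
    have hyz : a 0 1 * a 1 0 = 0 := by rw [hy]; ring
    have hx2 : a 0 0 * a 0 0 = 1 := by linear_combination h00 - hyz
    have hw2 : a 1 1 * a 1 1 = 1 := by
      have : a 1 0 * a 0 1 = 0 := by rw [hz]; ring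
      linear_combination h11 - this
    have hxw : a 0 0 * a 1 1 = 1 := by
      have : a 0 1 * a 1 0 = 0 := by rw [hy]; ring
      linear_combination hdet2 + this
    rcases mul_self_eq_one_iff.mp hx2 with hx | hx
    · left
      have hw : a 1 1 = 1 := by
        rcases mul_self_eq_one_iff.mp hw2 with hw | hw
        · exact hw
        · exfalso; apply two_ne; rw [hx, hw] at hxw; linear_combination -hxw
      rw [Matrix.eta_fin_two a, hx, hy, hz, hw]
      exact (Matrix.one_fin_two).symm
    · right
      have hw : a 1 1 = -1 := by
        rcases mul_self_eq_one_iff.mp hw2 with hw | hw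
        · exfalso; apply two_ne; rw [hx, hw] at hxw; linear_combination -hxw
        · exact hw
      rw [Matrix.eta_fin_two a, hx, hy, hz, hw]
      have : (-1 : Matrix (Fin 2) (Fin 2) (ZMod p)) = !![-1, 0; 0, -1] := by
        have h1 := Matrix.one_fin_two (α := ZMod p)
        rw [show (-1 : Matrix (Fin 2) (Fin 2) (ZMod p)) = -(1 : Matrix (Fin 2) (Fin 2) (ZMod p)) from rfl, h1]
        ext i j
        fin_cases i <;> fin_cases j <;> simp
      rw [this]

end GL2

section CyclicFour

private lemma isCyclic_of_unique_involution {Q : Type*} [Group Q] [Finite Q]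
    (h4 : Nat.card Q ∣ 4)
    (hinv : ∀ x y : Q, x * x = 1 → y * y = 1 → x ≠ 1 → y ≠ 1 → x = y) : IsCyclic Q := by
  haveI : Fact (Nat.Prime 2) := ⟨Nat.prime_two⟩
  obtain ⟨n, hn⟩ : ∃ n, Nat.card Q = n := ⟨_, rfl⟩
  have h1 : 0 < n := hn ▸ Nat.card_pos
  have h2 : n ≤ 4 := Nat.le_of_dvd (by norm_num) (hn ▸ h4)
  rw [hn] at h4
  interval_cases n
  · exact isCyclic_of_card_dvd_prime (p := 2) (by rw [hn]; norm_num)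
  · exact isCyclic_of_card_dvd_prime (p := 2) (by rw [hn])
  · exact absurd h4 (by decide)
  · by_cases hex : ∃ x : Q, orderOf x = 4
    · obtain ⟨x, hx⟩ := hex
      exact isCyclic_of_orderOf_eq_card x (by rw [hn, hx])
    · push_neg at hex
      exfalso
      have hsq : ∀ x : Q, x * x = 1 := by
        intro x
        have hdvd : orderOf x ∣ 4 := by
          have := orderOf_dvd_natCard x
          rwa [hn] at this
        have : orderOf x ∣ 2 := by
          have hdvd' : orderOf x ∣ 2 ^ 2 := by
            rw [show (2:ℕ) ^ 2 = 4 by norm_num]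
            exact hdvd
          rcases (Nat.dvd_prime_pow Nat.prime_two).mp hdvd' with ⟨i, hi, hoi⟩
          have : i ≠ 2 := by
            intro h
            exact hex x (by rw [hoi, h]; norm_num)
          calc orderOf x = 2 ^ i := hoi
            _ ∣ 2 ^ 1 := pow_dvd_pow 2 (by omega)
            _ = 2 := by norm_num
        have := orderOf_dvd_iff_pow_eq_one.mp this
        rwa [pow_two] at this
      haveI := Fintype.ofFinite Q
      haveI := Classical.decEq Q
      have hc : Fintype.card Q = 4 := by rw [← Nat.card_eq_fintype_card, hn]
      obtain ⟨x, hx⟩ := Fintype.exists_ne_of_one_lt_card (by omega) (1 : Q)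
      have hey : ∃ y : Q, y ≠ x ∧ y ≠ 1 := by
        by_contra hcon
        push_neg at hcon
        have hsub : (Finset.univ : Finset Q) ⊆ {x, 1} := by
          intro y _
          rcases eq_or_ne y x with rfl | hyx
          · simp
          · simp [hcon y hyx]
        have hle := Finset.card_le_card hsub
        have hle2 : ({x, 1} : Finset Q).card ≤ 2 :=
          (Finset.card_insert_le x {1}).trans (by simp)
        rw [Finset.card_univ, hc] at hle
        omega
      obtain ⟨y, hyx, hy1⟩ := hey
      exact hyx ((hinv x y (hsq x) (hsq y) hx hy1).symm)

end CyclicFour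

section GL2Main

universe u

private theorem solvable_of_embeds_GL2 {p : ℕ} [Fact p.Prime] {H : Type u} [Group H] [Finite H]
    (hcf : ∀ q : ℕ, q.Prime → ¬ q ^ 3 ∣ Nat.card H)
    (φ : H →* GL (Fin 2) (ZMod p)) (hφ : Function.Injective φ) : IsSolvable H := by
  classical
  set δ := (Matrix.GeneralLinearGroup.det).comp φ with hδ
  set K := δ.ker with hKdef
  have hKdvd : Nat.card K ∣ Nat.card H := Subgroup.card_subgroup_dvd_card _
  haveI : Fact (Nat.Prime 2) := ⟨Nat.prime_two⟩
  obtain ⟨Q⟩ : Nonempty (Sylow 2 K) := Sylow.nonempty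
  have hcardQ : Nat.card (Q : Subgroup K) = 2 ^ ((Nat.card K).factorization 2) :=
    Q.card_eq_multiplicity
  have hw : (Nat.card K).factorization 2 ≤ 2 := by
    by_contra hgt
    push_neg at hgt
    apply hcf 2 Nat.prime_two
    calc (2:ℕ) ^ 3 ∣ 2 ^ ((Nat.card K).factorization 2) := pow_dvd_pow 2 (by omega)
      _ ∣ Nat.card K := Nat.ordProj_dvd _ 2
      _ ∣ Nat.card H := hKdvd
  have h4 : Nat.card (Q : Subgroup K) ∣ 4 := by
    rw [hcardQ]
    calc (2:ℕ) ^ ((Nat.card K).factorization 2) ∣ 2 ^ 2 := pow_dvd_pow 2 hw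
      _ = 4 := by norm_num
  haveI hQcyc : IsCyclic (Q : Subgroup K) := by
    by_cases hp2 : p = 2
    · -- card H divides card GL₂(F₂) = 6, so the Sylow 2-subgroup has order ∣ 2
      subst hp2
      have hHdvd : Nat.card H ∣ Nat.card (GL (Fin 2) (ZMod 2)) := by
        have h1 : Nat.card H = Nat.card φ.range :=
          Nat.card_congr (MonoidHom.ofInjective hφ).toEquiv
        rw [h1]
        exact Subgroup.card_subgroup_dvd_card _
      have hGL : Nat.card (GL (Fin 2) (ZMod 2)) = 6 := by
        rw [Matrix.card_GL_field]
        simp [Fin.prod_univ_two, ZMod.card]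
      apply isCyclic_of_card_dvd_prime (p := 2)
      rw [hcardQ]
      have hdvd6 : (2:ℕ) ^ ((Nat.card K).factorization 2) ∣ 6 := by
        calc (2:ℕ) ^ ((Nat.card K).factorization 2) = Nat.card (Q : Subgroup K) := hcardQ.symm
          _ ∣ Nat.card K := Subgroup.card_subgroup_dvd_card _
          _ ∣ Nat.card H := hKdvd
          _ ∣ 6 := hGL ▸ hHdvd
      rcases Nat.lt_or_ge ((Nat.card K).factorization 2) 2 with hlt | hge
      · interval_cases h : ((Nat.card K).factorization 2) <;> norm_num
      · exfalso
        have : (4:ℕ) ∣ 6 := by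
          calc (4:ℕ) = 2 ^ 2 := by norm_num
            _ ∣ 2 ^ ((Nat.card K).factorization 2) := pow_dvd_pow 2 hge
            _ ∣ 6 := hdvd6
        norm_num at this
    · -- odd p: at most one involution in K
      apply isCyclic_of_unique_involution h4
      intro x y hx2 hy2 hx1 hy1
      -- push involutions down to H and then to matrices
      have key : ∀ z : (Q : Subgroup K), z * z = 1 → z ≠ 1 →
          ((φ ((z : K) : H)) : Matrix (Fin 2) (Fin 2) (ZMod p)) = -1 := by
        intro z hz2 hz1
        have hzH : ((z : K) : H) * ((z : K) : H) = 1 := by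
          have : ((z * z : (Q : Subgroup K)) : K) = ((1 : (Q : Subgroup K)) : K) := by
            rw [hz2]
          have h2 : ((z : K) * (z : K) : K) = 1 := by exact_mod_cast this
          exact_mod_cast congrArg (Subtype.val) h2
        have hzH1 : ((z : K) : H) ≠ 1 := by
          intro h
          apply hz1
          ext
          exact_mod_cast h
        have hmul : φ ((z : K) : H) * φ ((z : K) : H) = 1 := by
          rw [← _root_.map_mul, hzH, _root_.map_one]
        have hdet : Matrix.det ((φ ((z : K) : H)) : Matrix (Fin 2) (Fin 2) (ZMod p)) = 1 := by
          have hker : ((z : K) : H) ∈ δ.ker := (z : K).2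
          rw [MonoidHom.mem_ker, hδ, MonoidHom.comp_apply] at hker
          have := congrArg Units.val hker
          rwa [Matrix.GeneralLinearGroup.val_det_apply, Units.val_one] at this
        rcases gl2_involution hp2 (φ ((z : K) : H)) hmul hdet with h | h
        · exfalso
          apply hzH1
          apply hφ
          rw [_root_.map_one]
          exact Units.ext h
        · exact h
      have hxm := key x hx2 hx1
      have hym := key y hy2 hy1
      have : φ ((x : K) : H) = φ ((y : K) : H) := Units.ext (hxm.trans hym.symm)
      have hxy := hφ this
      ext
      exact_mod_cast hxy
  -- Burnside for the prime 2 on K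
  have hcommQ : ∀ a b : (Q : Subgroup K), a * b = b * a := by
    intro a b
    letI := IsCyclic.commGroup (α := (Q : Subgroup K))
    exact mul_comm a b
  have hQnc : (Subgroup.normalizer ((Q : Subgroup K) : Set K)) ≤ Subgroup.centralizer ((Q : Subgroup K) : Set K) := by
    apply normalizer_le_centralizer_aux Q hcommQ
    intro r hr hr2 _ σ hσ
    exact mulAut_of_dvd_four h4 hr hr2 σ hσ
  set N := (MonoidHom.transferSylow Q hQnc).ker with hN
  have hNodd : ¬ 2 ∣ Nat.card N := MonoidHom.not_dvd_card_ker_transferSylow Q hQnc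
  have hNdvd : Nat.card N ∣ Nat.card H :=
    (Subgroup.card_subgroup_dvd_card _).trans hKdvd
  haveI : Group.IsSolvable N :=
    solvable_of_odd_cubefree (Nat.card N) N _ inferInstance rfl hNodd
      (fun q hq h => hcf q hq (h.trans hNdvd))
  haveI : Group.IsSolvable (Q : Subgroup K) := isSolvable_of_comm hcommQ
  haveI : Group.IsSolvable K :=
    solvable_of_ker_le_range N.subtype (MonoidHom.transferSylow Q hQnc)
      (by rw [Subgroup.range_subtype])
  haveI : Group.IsSolvable (ZMod p)ˣ := isSolvable_of_comm (fun a b => mul_comm a b)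
  exact solvable_of_ker_le_range K.subtype δ (by rw [Subgroup.range_subtype])

end GL2Main

/-- Let `p` be a prime, let `m = 1` or `m = 2`, and let `G` be a finite insolvable group
whose order is cube-free.  Then the kernel of any group homomorphism from `G` to
`GL_m(𝔽_p)` is insolvable. -/
theorem kernel_insolvable_of_cubefree
    (p : ℕ) [Fact p.Prime] (m : ℕ) (hm : m = 1 ∨ m = 2)
    {G : Type*} [Group G] [Fintype G] (hG : ¬ IsSolvable G)
    (hcube : ∀ q : ℕ, q.Prime → ¬ q ^ 3 ∣ Fintype.card G)
    (f : G →* GL (Fin m) (ZMod p)) :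
    ¬ IsSolvable f.ker := by
  intro hker
  apply hG
  have hcf : ∀ q : ℕ, q.Prime → ¬ q ^ 3 ∣ Nat.card G := by
    intro q hq h
    exact hcube q hq (by rwa [Nat.card_eq_fintype_card] at h)
  have hrangedvd : Nat.card f.range ∣ Nat.card G := by
    have h1 : Nat.card f.range = Nat.card (G ⧸ f.ker) :=
      (Nat.card_congr (QuotientGroup.quotientKerEquivRange f).toEquiv).symm
    rw [h1]
    exact ⟨Nat.card f.ker, Subgroup.card_eq_card_quotient_mul_card_subgroup f.ker⟩
  haveI : Group.IsSolvable f.range := by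
    rcases hm with rfl | rfl
    · -- 1×1 matrices commute
      apply isSolvable_of_comm
      have hGL : ∀ A B : GL (Fin 1) (ZMod p), A * B = B * A := by
        intro A B
        apply Units.ext
        rw [Units.val_mul, Units.val_mul]
        apply Matrix.ext
        intro i j
        rw [Matrix.mul_apply, Matrix.mul_apply]
        rw [Fin.sum_univ_one, Fin.sum_univ_one]
        have hi : i = 0 := Subsingleton.elim i 0
        have hj : j = 0 := Subsingleton.elim j 0
        rw [hi, hj]
        exact mul_comm _ _
      intro a b
      apply Subtype.ext
      rw [Subgroup.coe_mul, Subgroup.coe_mul]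
      exact hGL _ _
    · exact solvable_of_embeds_GL2
        (fun q hq h => hcf q hq (h.trans hrangedvd))
        f.range.subtype f.range.subtype_injective
  haveI : Group.IsSolvable f.ker := hker
  exact solvable_of_ker_le_range f.ker.subtype f.rangeRestrict
    (by rw [MonoidHom.ker_rangeRestrict, Subgroup.range_subtype])
end
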